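/- arXiv:1703.10010 — 13 statements merged into one kernel-verified Lean document; each statement's English description precedes it below -/
import Mathlib

section
/- Let w be a Christoffel word of length n, let m = |w|_1 be its number of 1's and p = |w|_0 its number of 0's. Then for all i in Z_n, the (i+1)-th letter of w satisfies w_{i+1} = 1 if and only if (m·i mod n) ≥ p. -/
/-!
Writing `m * i = n * q + r` with `r = m * i % n`, the next value `m * (i + 1)` is
`n * q + (r + m)`, so the letter `w i` equals `(r + m) / n`. As `r < n` and `m ≤ n`, this
quotient is `0` or `1`, and it is `1` exactly when `r + m` reaches `n`.
-/

theorem Nat.add_div_eq_div_add_mod_add_div (a b : ℕ) {n : ℕ} (hn : 0 < n) :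
    (a + b) / n = a / n + (a % n + b) / n := by
  conv_lhs => rw [← Nat.div_add_mod a n, add_assoc, Nat.mul_add_div hn]

theorem Nat.add_div_eq_one_iff {r m n : ℕ} (hr : r < n) (hm : m ≤ n) :
    (r + m) / n = 1 ↔ n ≤ r + m := by
  rw [Nat.div_eq_iff (by omega)]
  omega

theorem stmt_0_general (n m : ℕ) (hn : 0 < n) (hm : m ≤ n)
    (w : ℕ → ℕ) (hw : ∀ k, w k = m * (k + 1) / n - m * k / n)
    (i : ℕ) :
    w i = 1 ↔ n - m ≤ m * i % n := by
  rw [hw, mul_add_one, Nat.add_div_eq_div_add_mod_add_div _ _ hn, Nat.add_sub_cancel_left,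
    Nat.add_div_eq_one_iff (Nat.mod_lt _ hn) hm]
  omega

/-- Let `w` be the Christoffel word of rate `m/n` (so of length `n`,
with `m` ones and `p = n - m` zeros), whose letters (0-indexed here, so `w i` is the
paper's `w_{i+1}`) are `w i = ⌊m(i+1)/n⌋ - ⌊m i /n⌋`.  Then for all `i ∈ Z_n`,
`w_{i+1} = 1` if and only if `(m·i mod n) ≥ p`. -/
theorem stmt_0 (n m : ℕ) (hn : 0 < n) (hm : m ≤ n) (hco : Nat.Coprime m n)
    (w : ℕ → ℕ) (hw : ∀ k, w k = m * (k + 1) / n - m * k / n)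
    (i : ℕ) (hi : i < n) :
    w i = 1 ↔ n - m ≤ m * i % n :=
  stmt_0_general n m hn hm w hw i
end

section
/- Every Christoffel word other than 0 and 1 is of the form 0p1 where p is a palindrome. More precisely, for relatively prime positive integers m < n, the Christoffel word w of rate m/n satisfies w_{n−k} = w_{k+1} for k = 1, 2, …, n−2. -/
/-!
Since `m` and `n` are coprime, `n` divides none of `m * j` for `0 < j < n`, so the two floors
`⌊mj/n⌋` and `⌊m(n-j)/n⌋`, whose arguments add up to the integer `m`, add up to `m - 1`.
Hence the prefix sums of the word are antisymmetric about the centre, and its interior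
differences are palindromic.
-/

theorem Nat.div_add_div_add_one_of_dvd_add_of_not_dvd {a b c : ℕ} (h : c ∣ a + b)
    (ha : ¬c ∣ a) : a / c + b / c + 1 = (a + b) / c := by
  have hc : 0 < c := Nat.pos_of_ne_zero fun hc0 => ha (by simp_all)
  exact (Nat.add_div_eq_of_le_mod_add_mod (Nat.le_mod_add_mod_of_dvd_add_of_not_dvd h ha) hc).symm

theorem Nat.Coprime.mul_div_add_mul_sub_div_add_one {m n j : ℕ} (hco : m.Coprime n)
    (hj0 : 0 < j) (hjn : j < n) : m * j / n + m * (n - j) / n + 1 = m := by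
  have hsum : m * j + m * (n - j) = m * n := by rw [← Nat.mul_add, Nat.add_sub_cancel' hjn.le]
  have hndvd : ¬n ∣ m * j := fun hdvd =>
    Nat.not_dvd_of_pos_of_lt hj0 hjn (hco.symm.dvd_of_dvd_mul_left hdvd)
  rw [Nat.div_add_div_add_one_of_dvd_add_of_not_dvd (hsum ▸ Dvd.intro_left m rfl) hndvd, hsum,
    Nat.mul_div_cancel m (by omega)]

/-- For relatively prime positive integers `m < n`, the Christoffel word
`w` of rate `m/n` (1-indexed letters `w k = ⌊mk/n⌋ - ⌊m(k-1)/n⌋` for `k = 1,…,n`)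
is of the form `0p1` with `p` a palindrome: `w 1 = 0`, `w n = 1` and
`w (n - k) = w (k + 1)` for `k = 1, 2, …, n - 2`. -/
theorem stmt_1 (m n : ℕ) (hm : 0 < m) (hmn : m < n) (hco : Nat.Coprime m n)
    (w : ℕ → ℕ) (hw : ∀ k, w k = m * k / n - m * (k - 1) / n) :
    w 1 = 0 ∧ w n = 1 ∧ ∀ k, 1 ≤ k → k ≤ n - 2 → w (n - k) = w (k + 1) := by
  have hflip {j : ℕ} (hj0 : 0 < j) (hjn : j < n) :=
    hco.mul_div_add_mul_sub_div_add_one hj0 hjn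
  refine ⟨?_, ?_, fun k hk1 hk2 => ?_⟩
  · simp [hw, Nat.div_eq_of_lt hmn]
  · have h1 := hflip one_pos (by omega)
    rw [Nat.mul_one, Nat.div_eq_of_lt hmn] at h1
    rw [hw, Nat.mul_div_cancel m (by omega)]
    omega
  · have hk := hflip hk1 (by omega)
    have hk' := hflip (j := k + 1) (by omega) (by omega)
    have hmono : m * k / n ≤ m * (k + 1) / n := Nat.div_le_div_right (by gcongr; omega)
    rw [hw, hw, show n - k - 1 = n - (k + 1) by omega, Nat.add_sub_cancel]
    omega
end

section
/- Let w be a Christoffel word of length n, let m = |w|_1, and let l satisfy l·m ≡ 1 (mod n). For i ∈ Z, let u(i) denote the conjugate of w obtained by cyclic rotation by i mod n, i.e., u(i) = w_{(ī+1):n} w_{1:ī} where ī = i mod n. Then the conjugates satisfy the strict lexicographic chain w = u(0) ≺ u(l) ≺ u(2l) ≺ ⋯ ≺ u((n−1)l) = w^R, where w^R is the reverse of w. -/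
/-! The `k`-th letter of the Christoffel word is `1` exactly when `m k mod n` is one of the top
`m` residues `n - m, …, n - 1`. Hence rotating by `r` gives the word whose `k`-th letter is read
off the residue `m k + m r`, and since `l m ≡ 1 (mod n)` the rotation by `j l` is the word with
shift `j`. Raising the shift from `s` to `s + 1` changes a letter only at the position `k₁` where
`m k₁ + s = -1 - m` (a `0` becomes `1`) and at `k₁ + 1` (a `1` becomes `0`), positions taken mod
`n`; the second wraps around to `0` only when `s = -1`, so otherwise the first difference is `0 < 1`. The reflection `x ↦ -1 - m - x` preserves the
top residues, which turns the reverse of the word into the shift `-1`. -/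

theorem ZMod.val_neg_natCast {n a : ℕ} (ha : 0 < a) (han : a ≤ n) :
    (-(a : ZMod n)).val = n - a := by
  have : -(a : ZMod n) = ((n - a : ℕ) : ZMod n) := by
    rw [Nat.cast_sub han, ZMod.natCast_self, zero_sub]
  rw [this, ZMod.val_cast_of_lt (by omega)]

theorem ZMod.eq_of_natCast_mul_eq {n m i j : ℕ} (hco : m.Coprime n) (hi : i < n) (hj : j < n)
    (h : (m : ZMod n) * i = m * j) : i = j := by
  rw [← ZMod.coe_unitOfCoprime m hco] at h
  rw [← ZMod.val_cast_of_lt hi, ← ZMod.val_cast_of_lt hj, (Units.isUnit _).mul_left_cancel h]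

section Christoffel

variable {n : ℕ} (m : ℕ)

def christoffelLetter (x : ZMod n) : ℕ := if n - m ≤ x.val then 1 else 0

def christoffelConj (s : ZMod n) : List ℕ :=
  (List.range n).map fun k : ℕ => christoffelLetter m ((m : ZMod n) * (k : ZMod n) + s)

theorem floor_sub_floor_eq_christoffelLetter (hn : 0 < n) (hm : m ≤ n) (i : ℕ) :
    m * (i + 1) / n - m * i / n = christoffelLetter m (m * i : ZMod n) := by
  rw [christoffelLetter, ← Nat.cast_mul, ZMod.val_natCast]
  have hdiv := Nat.div_add_mod (m * i) n
  have hmod := Nat.mod_lt (m * i) hn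
  generalize m * i / n = q, m * i % n = r at hdiv hmod
  have hsum : m * (i + 1) = (r + m) + n * q := by rw [mul_add, ← hdiv]; ring
  rw [hsum, Nat.add_mul_div_left _ _ hn]
  split_ifs with h
  · rw [Nat.div_eq_of_lt_le (k := 1) (by omega) (by omega)]; omega
  · rw [Nat.div_eq_of_lt (by omega)]; omega

theorem christoffelConj_rotate (s : ZMod n) (r : ℕ) :
    (christoffelConj m s).rotate r = christoffelConj m (s + (m : ZMod n) * (r : ZMod n)) := by
  apply List.ext_getElem (by simp [christoffelConj])
  intro k _ _
  simp only [christoffelConj, List.getElem_rotate, List.getElem_map, List.getElem_range,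
    List.length_map, List.length_range, ZMod.natCast_mod]
  push_cast
  ring_nf

theorem christoffelLetter_neg_natCast {a : ℕ} (ha : 0 < a) (han : a ≤ n) :
    christoffelLetter m (-(a : ZMod n)) = if a ≤ m then 1 else 0 := by
  rw [christoffelLetter, ZMod.val_neg_natCast ha han]
  exact if_congr (by omega) rfl rfl

theorem christoffelLetter_add_one [NeZero n] (hm : m < n) {x : ZMod n} (hx : x ≠ -1)
    (hxm : x ≠ -((m + 1 : ℕ) : ZMod n)) :
    christoffelLetter m (x + 1) = christoffelLetter m x := by
  have hval_ne : ∀ a, 0 < a → a ≤ n → x ≠ -(a : ZMod n) → x.val ≠ n - a :=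
    fun a ha han hxa hv =>
      hxa (ZMod.val_injective n (by rw [hv, ZMod.val_neg_natCast ha han]))
  have h1 := hval_ne 1 one_pos NeZero.one_le (by simpa using hx)
  have h2 := hval_ne (m + 1) (by omega) hm hxm
  have hlt := ZMod.val_lt x
  have hsucc : (x + 1).val = x.val + 1 := by
    rw [← ZMod.val_cast_of_lt (show x.val + 1 < n by omega), Nat.cast_succ, ZMod.natCast_zmod_val]
  rw [christoffelLetter, christoffelLetter, hsucc]
  split_ifs <;> omega

theorem christoffelLetter_neg_one_sub_sub [NeZero n] (hm : m ≤ n) (x : ZMod n) :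
    christoffelLetter m (-1 - (m : ZMod n) - x) = christoffelLetter m x := by
  have hlt := ZMod.val_lt x
  by_cases h : n - m ≤ x.val
  · have hx : -1 - m - x = -((x.val + m + 1 - n : ℕ) : ZMod n) := by
      rw [Nat.cast_sub (by omega)]
      push_cast [ZMod.natCast_self, ZMod.natCast_zmod_val]
      ring
    rw [hx, christoffelLetter_neg_natCast m (by omega) (by omega), christoffelLetter, if_pos h,
      if_pos (by omega)]
  · have hx : -1 - m - x = -((x.val + m + 1 : ℕ) : ZMod n) := by
      push_cast [ZMod.natCast_zmod_val]
      ring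
    rw [hx, christoffelLetter_neg_natCast m (by omega) (by omega), christoffelLetter, if_neg h,
      if_neg (by omega)]

theorem reverse_christoffelConj_zero [NeZero n] (hm : m ≤ n) :
    (christoffelConj m (0 : ZMod n)).reverse = christoffelConj m (-1 : ZMod n) := by
  apply List.ext_getElem (by simp [christoffelConj])
  intro i hi _
  simp only [christoffelConj, List.length_reverse, List.length_map, List.length_range] at hi
  simp only [christoffelConj, List.getElem_reverse, List.getElem_map, List.getElem_range,
    List.length_map, List.length_range]
  rw [← christoffelLetter_neg_one_sub_sub m hm]
  congr 1
  rw [Nat.cast_sub (by omega), Nat.cast_sub (by omega), ZMod.natCast_self]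
  ring

theorem christoffelConj_lt_add_one [NeZero n] (hm : m < n) (hco : m.Coprime n) {s : ZMod n}
    (hs : s ≠ -1) :
    christoffelConj m s < christoffelConj m (s + 1) := by
  obtain ⟨k₂, hk₂n, hk₂⟩ : ∃ k < n, (m : ZMod n) * k = -1 - s :=
    ⟨_, ZMod.val_lt ((-1 - s) * (m : ZMod n)⁻¹), by
      rw [ZMod.natCast_zmod_val, mul_left_comm, ZMod.coe_mul_inv_eq_one m hco, mul_one]⟩
  obtain ⟨k₁, rfl⟩ : ∃ k₁, k₂ = k₁ + 1 := Nat.exists_eq_succ_of_ne_zero <| by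
    rintro rfl
    rw [Nat.cast_zero, mul_zero] at hk₂
    exact hs (by linear_combination hk₂)
  have hk₁ : (m : ZMod n) * k₁ + s = -((m + 1 : ℕ) : ZMod n) := by
    push_cast at hk₂ ⊢
    linear_combination hk₂
  have hm0 : 0 < m := by
    rcases Nat.eq_zero_or_pos m with rfl | h
    · obtain rfl : n = 1 := Nat.coprime_zero_left n |>.mp hco
      exact absurd (Subsingleton.elim _ _) hs
    · exact h
  have hlen : ∀ t : ZMod n, (christoffelConj m t).length = n := by simp [christoffelConj]
  refine List.lt_iff_exists.2 (Or.inr ⟨k₁, by rw [hlen]; omega, by rw [hlen]; omega, ?_, ?_⟩)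
  · intro j hj
    simp only [christoffelConj, List.getElem_map, List.getElem_range]
    rw [← add_assoc, christoffelLetter_add_one m hm]
    · intro h
      have := ZMod.eq_of_natCast_mul_eq hco (i := j) (by omega) hk₂n
        (by linear_combination h - hk₂)
      omega
    · intro h
      have := ZMod.eq_of_natCast_mul_eq hco (i := j) (j := k₁) (by omega) (by omega)
        (by linear_combination h - hk₁)
      omega
  · simp only [christoffelConj, List.getElem_map, List.getElem_range]
    rw [← add_assoc, hk₁, christoffelLetter_neg_natCast m (by omega) hm,
      show -((m + 1 : ℕ) : ZMod n) + 1 = -(m : ZMod n) by push_cast; ring,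
      christoffelLetter_neg_natCast m hm0 hm.le, if_neg (by omega), if_pos le_rfl]
    exact Nat.zero_lt_one

end Christoffel

/-- Let `w` be the Christoffel word of length `n` with `m = |w|₁` ones,
and let `l` satisfy `l·m ≡ 1 (mod n)`.  The conjugate `u(i)` obtained by cyclically
rotating `w` by `i mod n` positions is `w.rotate i`.  Then the conjugates form the
strict lexicographic chain `w = u(0) ≺ u(l) ≺ u(2l) ≺ ⋯ ≺ u((n-1)l) = w^R`. -/
theorem stmt_2 (n m l : ℕ) (hn : 0 < n) (hm : m < n) (hco : Nat.Coprime m n)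
    (hl : l * m % n = 1)
    (w : List ℕ) (hw : w = (List.range n).map (fun i => m * (i + 1) / n - m * i / n)) :
    w.rotate 0 = w ∧
    w.rotate ((n - 1) * l % n) = w.reverse ∧
    ∀ j : ℕ, j + 1 < n →
      List.Lex (· < ·) (w.rotate (j * l % n)) (w.rotate ((j + 1) * l % n)) := by
  have : NeZero n := NeZero.of_pos hn
  have hw₀ : w = christoffelConj m (0 : ZMod n) := by
    rw [hw, christoffelConj]
    refine List.map_congr_left fun i _ => ?_
    rw [add_zero, floor_sub_floor_eq_christoffelLetter m hn hm.le]
  have hlm : (l : ZMod n) * m = 1 := by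
    rw [← Nat.cast_mul, ← ZMod.natCast_mod, hl, Nat.cast_one]
  have hshift : ∀ j : ℕ, (0 : ZMod n) + m * ((j * l % n : ℕ) : ZMod n) = j := fun j => by
    rw [ZMod.natCast_mod]
    push_cast
    linear_combination (j : ZMod n) * hlm
  subst hw₀
  refine ⟨List.rotate_zero _, ?_, fun j hj => ?_⟩
  · rw [christoffelConj_rotate, hshift, reverse_christoffelConj_zero m hm.le, Nat.cast_pred hn,
      ZMod.natCast_self, zero_sub]
  · have hj' : (j : ZMod n) ≠ -1 := fun h => by
      have : ((j + 1 : ℕ) : ZMod n) = 0 := by rw [Nat.cast_succ, h, neg_add_cancel]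
      exact absurd (Nat.le_of_dvd j.succ_pos ((ZMod.natCast_eq_zero_iff _ _).1 this)) (by omega)
    rw [christoffelConj_rotate, christoffelConj_rotate, hshift, hshift, Nat.cast_succ]
    exact christoffelConj_lt_add_one m hm hco hj'
end

section
/- Fix n ∈ ℕ and q ∈ [0,1]. Let q_1 < q_2 < ⋯ < q_m be the Farey sequence F_n, and for s ∈ [0,1] let p(s) be the first n letters of w^ω where w is the mechanical word of rate s. Then p(q) = p(q_i) if and only if either q = q_i = 1, or q ∈ [q_i, q_{i+1}) for some 1 ≤ i < m. -/
/-!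
Two mechanical prefixes agree iff the partial sums `⌊s k⌋`, `k ≤ n`, agree. For `t ≤ s` these
floors differ at some `k ≤ n` exactly when a fraction `a / k` with `k ≤ n` lies in `(t, s]`:
take `k` the denominator of such a fraction, or conversely `a = ⌊t k⌋ + 1`. So `p q = p q_i`
says that `q_i ≤ q` and that no Farey fraction lies in `(q_i, q]`, i.e. `q < q_{i+1}`, or
`q = 1` when `q_i = 1` is the last one.
-/

theorem forall_le_eq_iff_forall_lt_sub_eq {f g : ℕ → ℤ} (h₀ : f 0 = g 0) (n : ℕ) :
    (∀ k < n, f (k + 1) - f k = g (k + 1) - g k) ↔ ∀ k ≤ n, f k = g k := by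
  refine ⟨fun h k hk => ?_, fun h k hk => by rw [h k hk.le, h (k + 1) hk]⟩
  induction k with
  | zero => exact h₀
  | succ k ih => linarith [h k hk, ih (Nat.le_of_succ_le hk)]

section FloorRing

variable {K : Type*} [Field K] [LinearOrder K] [IsStrictOrderedRing K] [FloorRing K]

theorem Int.floor_mul_den_lt_floor_mul_den {t s : K} {r : ℚ} (htr : t < r) (hrs : r ≤ s) :
    ⌊t * r.den⌋ < ⌊s * r.den⌋ := by
  have hd : (0 : K) < r.den := by exact_mod_cast r.pos
  have hnum : (r : K) * r.den = r.num := by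
    exact_mod_cast congrArg (Rat.cast (K := K)) r.mul_den_eq_num
  calc ⌊t * r.den⌋ < r.num := Int.floor_lt.mpr (hnum ▸ mul_lt_mul_of_pos_right htr hd)
    _ ≤ ⌊s * r.den⌋ := Int.le_floor.mpr (hnum ▸ mul_le_mul_of_nonneg_right hrs hd.le)

theorem exists_rat_den_le_mem_Ioc_of_floor_mul_lt {t s : K} {k : ℕ} (h : ⌊t * k⌋ < ⌊s * k⌋) :
    ∃ r : ℚ, r.den ≤ k ∧ (r : K) ∈ Set.Ioc t s := by
  have hk : 0 < k := Nat.pos_of_ne_zero (by rintro rfl; simp at h)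
  have hk' : (0 : K) < k := by exact_mod_cast hk
  set j := ⌊t * k⌋ + 1
  refine ⟨(j : ℚ) / k, ?_, ?_, ?_⟩
  · have : (((j : ℚ) / k).den : ℤ) ∣ k := by
      have := Rat.den_dvd j k
      rwa [← Rat.intCast_div_eq_divInt, Int.cast_natCast] at this
    exact Nat.le_of_dvd hk (by exact_mod_cast this)
  · push_cast
    rw [lt_div_iff₀ hk']
    exact Int.lt_floor_add_one _ |>.trans_eq (by push_cast [j]; rfl)
  · push_cast
    rw [div_le_iff₀ hk']
    exact (Int.le_floor.mp (by omega : j ≤ ⌊s * k⌋))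

theorem forall_floor_mul_eq_iff_forall_rat_notMem_Ioc {t s : K} (hts : t ≤ s) (n : ℕ) :
    (∀ k ≤ n, ⌊s * k⌋ = ⌊t * k⌋) ↔ ∀ r : ℚ, r.den ≤ n → (r : K) ∉ Set.Ioc t s := by
  constructor
  · rintro h r hr ⟨htr, hrs⟩
    exact (Int.floor_mul_den_lt_floor_mul_den htr hrs).ne' (h _ hr)
  · intro h k hk
    refine ((Int.floor_le_floor (mul_le_mul_of_nonneg_right hts k.cast_nonneg)).eq_or_lt).elim
      Eq.symm fun hlt => ?_
    obtain ⟨r, hrk, hr⟩ := exists_rat_den_le_mem_Ioc_of_floor_mul_lt hlt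
    exact absurd hr (h r (hrk.trans hk))

end FloorRing

theorem StrictMono.forall_notMem_Ioc_iff {α : Type*} [LinearOrder α] {m : ℕ} {f : Fin m → α}
    (hf : StrictMono f) (i : Fin m) (x : α) :
    (∀ j, f j ∉ Set.Ioc (f i) x) ↔ ∀ h : (i : ℕ) + 1 < m, x < f ⟨i + 1, h⟩ := by
  constructor
  · intro H h
    by_contra hx
    exact H _ ⟨hf (Fin.lt_def.mpr (Nat.lt_succ_self _)), not_lt.mp hx⟩
  · rintro H j ⟨hij, hjx⟩
    have hij : i < j := hf.lt_iff_lt.mp hij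
    have h : (i : ℕ) + 1 < m := lt_of_le_of_lt hij j.2
    have hsucc : f ⟨i + 1, h⟩ ≤ f j := hf.monotone (Fin.le_def.mpr (Nat.succ_le_of_lt hij))
    exact ((hsucc.trans hjx).trans_lt (H h)).false

theorem StrictMono.apply_eq_iff_not_succ_lt {α : Type*} [PartialOrder α] {m : ℕ} {f : Fin m → α}
    (hf : StrictMono f) {a : α} (ha : a ∈ Set.range f) (hle : ∀ j, f j ≤ a) (i : Fin m) :
    f i = a ↔ ¬ (i : ℕ) + 1 < m := by
  constructor
  · rintro rfl h
    exact (hf (show i < ⟨(i : ℕ) + 1, h⟩ from Nat.lt_succ_self _) |>.trans_le (hle _)).false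
  · intro h
    obtain ⟨j, rfl⟩ := ha
    exact le_antisymm (hle i) (hf.monotone (show j ≤ i from Fin.le_def.mpr (by omega)))

theorem mechanicalPrefix_eq_iff {n : ℕ} {p : ℝ → Fin n → ℤ}
    (hp : ∀ s (k : Fin n), p s k = ⌊s * ((k : ℕ) + 1)⌋ - ⌊s * (k : ℕ)⌋) (s t : ℝ) :
    p s = p t ↔ ∀ k ≤ n, ⌊s * k⌋ = ⌊t * k⌋ := by
  rw [← forall_le_eq_iff_forall_lt_sub_eq (by simp), funext_iff, Fin.forall_iff]
  simp only [hp, Nat.cast_add, Nat.cast_one]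

theorem stmt_3_general (n : ℕ) (hn : 0 < n) (m : ℕ) (q_ : Fin m → ℚ)
    (hmono : StrictMono q_)
    (hrange : Set.range q_ = {x : ℚ | 0 ≤ x ∧ x ≤ 1 ∧ x.den ≤ n})
    (q : ℝ) (hq1 : q ≤ 1)
    (p : ℝ → Fin n → ℤ)
    (hp : ∀ s (k : Fin n), p s k = ⌊s * ((k : ℕ) + 1)⌋ - ⌊s * (k : ℕ)⌋)
    (i : Fin m) :
    p q = p (q_ i) ↔
      ((q = (q_ i : ℝ) ∧ (q_ i : ℚ) = 1) ∨
        ∃ h : (i : ℕ) + 1 < m, ((q_ i : ℝ) ≤ q ∧ q < (q_ ⟨(i : ℕ) + 1, h⟩ : ℝ))) := by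
  have hfarey (r : ℚ) : r ∈ Set.range q_ ↔ 0 ≤ r ∧ r ≤ 1 ∧ r.den ≤ n := by rw [hrange]; rfl
  obtain ⟨hi0, -, hin⟩ := (hfarey _).mp ⟨i, rfl⟩
  have hlast : q_ i = 1 ↔ ¬ (i : ℕ) + 1 < m :=
    hmono.apply_eq_iff_not_succ_lt ((hfarey 1).mpr ⟨zero_le_one, le_rfl, by simpa⟩)
      (fun j => ((hfarey _).mp ⟨j, rfl⟩).2.1) i
  rw [mechanicalPrefix_eq_iff hp]
  rcases lt_or_ge q (q_ i) with hlt | hle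
  · have hne := (Int.floor_mul_den_lt_floor_mul_den hlt le_rfl).ne
    refine iff_of_false (fun h => hne (h _ hin)) ?_
    rintro (⟨rfl, -⟩ | ⟨-, hle, -⟩) <;> linarith
  have hgap : (∀ r : ℚ, r.den ≤ n → (r : ℝ) ∉ Set.Ioc (q_ i : ℝ) q) ↔
      ∀ j, (q_ j : ℝ) ∉ Set.Ioc (q_ i : ℝ) q := by
    refine ⟨fun h j => h _ ((hfarey _).mp ⟨j, rfl⟩).2.2, fun h r hr hmem => ?_⟩
    have hr0 : 0 ≤ r := by exact_mod_cast (Rat.cast_nonneg.mpr hi0).trans hmem.1.le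
    have hr1 : r ≤ 1 := by exact_mod_cast hmem.2.trans hq1
    obtain ⟨j, rfl⟩ := (hfarey r).mpr ⟨hr0, hr1, hr⟩
    exact h j hmem
  rw [forall_floor_mul_eq_iff_forall_rat_notMem_Ioc hle, hgap, StrictMono.forall_notMem_Ioc_iff
    (f := fun j => (q_ j : ℝ)) (Rat.cast_strictMono.comp hmono) i q]
  by_cases hsucc : (i : ℕ) + 1 < m
  · have : q_ i ≠ 1 := fun h => hlast.mp h hsucc
    simp [hsucc, hle, this]
  · have hi : q_ i = 1 := hlast.mpr hsucc
    have : q = 1 := le_antisymm hq1 (by simpa [hi] using hle)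
    simp [hsucc, hi, this]

/-- Fix `n ∈ ℕ` and `q ∈ [0,1]`.  Let `q_1 < ⋯ < q_m` be the Farey
sequence `F_n` (the increasing enumeration of the rationals in `[0,1]` with denominator
at most `n`), and for `s ∈ [0,1]` let `p s` be the first `n` letters of the mechanical
word of rate `s`, i.e. `(p s) k = ⌊s(k+1)⌋ - ⌊s k⌋` for `k = 0,…,n-1` (0-indexed).
Then `p q = p (q_i)` if and only if either `q = q_i = 1`, or
`q ∈ [q_i, q_{i+1})` for some `1 ≤ i < m`. -/
theorem stmt_3 (n : ℕ) (hn : 0 < n) (m : ℕ) (q_ : Fin m → ℚ)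
    (hmono : StrictMono q_)
    (hrange : Set.range q_ = {x : ℚ | 0 ≤ x ∧ x ≤ 1 ∧ x.den ≤ n})
    (q : ℝ) (hq0 : 0 ≤ q) (hq1 : q ≤ 1)
    (p : ℝ → Fin n → ℤ)
    (hp : ∀ s (k : Fin n), p s k = ⌊s * ((k : ℕ) + 1)⌋ - ⌊s * (k : ℕ)⌋)
    (i : Fin m) :
    p q = p (q_ i) ↔
      ((q = (q_ i : ℝ) ∧ (q_ i : ℚ) = 1) ∨
        ∃ h : (i : ℕ) + 1 < m, ((q_ i : ℝ) ≤ q ∧ q < (q_ ⟨(i : ℕ) + 1, h⟩ : ℝ))) :=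
  stmt_3_general n hn m q_ hmono hrange q hq1 p hp i
end

section
/- Let a, b be binary words of common length n with |a|_1 = |b|_1 and |a_{1:k}|_1 ≥ |b_{1:k}|_1 for all k < n. Then a swaps to b; moreover, a swaps to b in exactly d(a,b) := Σ_{i=1}^n | |a_{1:i}|_1 − |b_{1:i}|_1 | exchanges. -/
/-!
Write `s(k)` for the number of ones among the first `k` letters of `a` minus that of `b`;
the hypotheses say `s ≥ 0`, and `d(a,b) = Σ_{1 ≤ i ≤ n} s(i)`. If `a ≠ b`, some `s(j) > 0` with
`a_j = 0` (otherwise `s` could never return to `0` at the end), and walking left from `j` over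
zeros of `a` keeps `s > 0` up to a factor `10` of `a`. Exchanging that factor lowers `s` by one
at exactly one position and leaves it non-negative, so `d` drops by exactly one, and induction
on `d` finishes.
-/

/-- An *exchange* replaces a factor `10` by `01` at a single position. -/
def Exchange (a b : List Bool) : Prop :=
  ∃ p q : List Bool, a = p ++ [true, false] ++ q ∧ b = p ++ [false, true] ++ q

open Finset

namespace BinaryWord

def ExchangeChain (a b : List Bool) (d : ℕ) : Prop :=
  ∃ f : ℕ → List Bool, f 0 = a ∧ f d = b ∧ ∀ i < d, Exchange (f i) (f (i + 1))

theorem ExchangeChain.refl (a : List Bool) : ExchangeChain a a 0 :=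
  ⟨fun _ => a, rfl, rfl, fun _ hi => absurd hi (Nat.not_lt_zero _)⟩

theorem ExchangeChain.cons {a a' b : List Bool} {d : ℕ} (h : Exchange a a')
    (hchain : ExchangeChain a' b d) : ExchangeChain a b (d + 1) := by
  obtain ⟨f, hf0, hfd, hf⟩ := hchain
  refine ⟨fun k => if k = 0 then a else f (k - 1), rfl, by simp [hfd], ?_⟩
  rintro (_ | i) hi
  · simpa [hf0] using h
  · simpa using hf i (by omega)

def prefixOnes (l : List Bool) (k : ℕ) : ℕ := (l.take k).count true

def prefixDist (a b : List Bool) (n : ℕ) : ℕ :=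
  ∑ i ∈ range n, ((prefixOnes a (i + 1) : ℤ) - prefixOnes b (i + 1)).natAbs

theorem prefixOnes_zero (l : List Bool) : prefixOnes l 0 = 0 := by
  simp [prefixOnes]

theorem prefixOnes_succ (l : List Bool) (k : ℕ) :
    prefixOnes l (k + 1) = prefixOnes l k + (l.getD k false).toNat := by
  rw [prefixOnes, prefixOnes, List.take_add_one, List.count_append, List.getD_eq_getElem?_getD]
  rcases l[k]? with _ | (_ | _) <;> simp

theorem prefixOnes_of_length_le {l : List Bool} {k : ℕ} (h : l.length ≤ k) :
    prefixOnes l k = l.count true := by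
  rw [prefixOnes, List.take_of_length_le h]

theorem prefixOnes_eq_of_length_le {a b : List Bool} (hcount : a.count true = b.count true)
    {k : ℕ} (ha : a.length ≤ k) (hb : b.length ≤ k) : prefixOnes a k = prefixOnes b k := by
  rw [prefixOnes_of_length_le ha, prefixOnes_of_length_le hb, hcount]

theorem prefixOnes_mono (l : List Bool) : Monotone (prefixOnes l) :=
  monotone_nat_of_le_succ fun k => by rw [prefixOnes_succ]; omega

theorem eq_of_prefixOnes_eq {a b : List Bool} (hlen : a.length = b.length)
    (h : ∀ k, prefixOnes a k = prefixOnes b k) : a = b := by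
  refine List.ext_getElem hlen fun k hka hkb => ?_
  have hk := h (k + 1)
  rw [prefixOnes_succ, prefixOnes_succ, h k, List.getD_eq_getElem _ _ hka,
    List.getD_eq_getElem _ _ hkb] at hk
  revert hk
  cases a[k] <;> cases b[k] <;> simp

section Surplus

variable {a b : List Bool}

theorem exists_getD_false_of_prefixOnes_lt (hcount : a.count true = b.count true) {k : ℕ}
    (hk : prefixOnes b k < prefixOnes a k) :
    ∃ j, a.getD j false = false ∧ prefixOnes b j < prefixOnes a j := by
  by_contra! hnone
  have hsurplus : ∀ j, k ≤ j → prefixOnes b j < prefixOnes a j := by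
    refine Nat.le_induction hk fun j _ hj => ?_
    have haj : a.getD j false = true := by simpa using mt (hnone j) (not_le.mpr hj)
    rw [prefixOnes_succ, prefixOnes_succ, haj]
    cases b.getD j false <;> simp <;> omega
  have hend := hsurplus (k + a.length + b.length) (by omega)
  rw [prefixOnes_eq_of_length_le hcount (by omega) (by omega)] at hend
  exact lt_irrefl _ hend

theorem exists_true_false_of_prefixOnes_lt {j : ℕ} (hj : a.getD j false = false)
    (hlt : prefixOnes b j < prefixOnes a j) :
    ∃ m, a.getD m false = true ∧ a.getD (m + 1) false = false ∧
      prefixOnes b (m + 1) < prefixOnes a (m + 1) := by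
  induction j with
  | zero => simp [prefixOnes_zero] at hlt
  | succ m ih =>
    cases ham : a.getD m false
    · refine ih ham ?_
      have hb := prefixOnes_mono b (Nat.le_add_right m 1)
      rw [prefixOnes_succ a, ham] at hlt
      simp only [Bool.toNat_false, add_zero] at hlt
      omega
    · exact ⟨m, ham, hj, hlt⟩

end Surplus

theorem exists_eq_append_true_false {a : List Bool} {m : ℕ} (hlen : m + 1 < a.length)
    (hm : a.getD m false = true) (hm1 : a.getD (m + 1) false = false) :
    ∃ p q, a = p ++ [true, false] ++ q ∧ p.length = m := by
  refine ⟨a.take m, a.drop (m + 2), ?_, by simp; omega⟩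
  rw [List.getD_eq_getElem _ _ (by omega)] at hm
  rw [List.getD_eq_getElem _ _ hlen] at hm1
  conv_lhs => rw [← List.take_append_drop m a, List.drop_eq_getElem_cons (by omega),
    List.drop_eq_getElem_cons hlen, hm, hm1]
  simp

theorem prefixOnes_exchange (p q : List Bool) (k : ℕ) :
    prefixOnes (p ++ [false, true] ++ q) k + (if k = p.length + 1 then 1 else 0) =
      prefixOnes (p ++ [true, false] ++ q) k := by
  simp only [prefixOnes, List.append_assoc, List.take_append, List.count_append]
  rcases hr : k - p.length with _ | _ | r <;> simp <;> omega

section Step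

variable {a b : List Bool}

theorem prefixDist_eq_sum_sub (hdom : ∀ k, prefixOnes b k ≤ prefixOnes a k) (n : ℕ) :
    prefixDist a b n = ∑ i ∈ range n, (prefixOnes a (i + 1) - prefixOnes b (i + 1)) := by
  refine sum_congr rfl fun i _ => ?_
  have := hdom (i + 1)
  omega

theorem prefixOnes_le_exchange {p q : List Bool}
    (hdom : ∀ k, prefixOnes b k ≤ prefixOnes (p ++ [true, false] ++ q) k)
    (hlt : prefixOnes b (p.length + 1) < prefixOnes (p ++ [true, false] ++ q) (p.length + 1))
    (k : ℕ) : prefixOnes b k ≤ prefixOnes (p ++ [false, true] ++ q) k := by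
  have := prefixOnes_exchange p q k
  have := hdom k
  split_ifs at * <;> subst_vars <;> omega

theorem prefixDist_exchange_add_one {p q : List Bool}
    (hdom : ∀ k, prefixOnes b k ≤ prefixOnes (p ++ [true, false] ++ q) k)
    (hdom' : ∀ k, prefixOnes b k ≤ prefixOnes (p ++ [false, true] ++ q) k) {n : ℕ}
    (hn : p.length < n) :
    prefixDist (p ++ [false, true] ++ q) b n + 1 = prefixDist (p ++ [true, false] ++ q) b n := by
  rw [prefixDist_eq_sum_sub hdom, prefixDist_eq_sum_sub hdom']
  calc ∑ i ∈ range n, (prefixOnes (p ++ [false, true] ++ q) (i + 1) - prefixOnes b (i + 1)) + 1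
      = ∑ i ∈ range n, ((prefixOnes (p ++ [false, true] ++ q) (i + 1) - prefixOnes b (i + 1))
          + if i = p.length then 1 else 0) := by
        rw [sum_add_distrib, sum_ite_eq', if_pos (mem_range.mpr hn)]
    _ = ∑ i ∈ range n, (prefixOnes (p ++ [true, false] ++ q) (i + 1) - prefixOnes b (i + 1)) := by
        refine sum_congr rfl fun i _ => ?_
        have := prefixOnes_exchange p q (i + 1)
        have := hdom' (i + 1)
        split_ifs at * <;> omega

theorem exists_exchange_prefixDist_succ {n : ℕ} (ha : a.length = n) (hb : b.length = n)
    (hcount : a.count true = b.count true) (hdom : ∀ k, prefixOnes b k ≤ prefixOnes a k)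
    (hpos : prefixDist a b n ≠ 0) :
    ∃ a', Exchange a a' ∧ a'.length = n ∧ a'.count true = b.count true ∧
      (∀ k, prefixOnes b k ≤ prefixOnes a' k) ∧ prefixDist a' b n + 1 = prefixDist a b n := by
  obtain ⟨i, -, hi⟩ := exists_ne_zero_of_sum_ne_zero hpos
  have hlt : prefixOnes b (i + 1) < prefixOnes a (i + 1) := by
    have := hdom (i + 1)
    omega
  obtain ⟨j, hj, hltj⟩ := exists_getD_false_of_prefixOnes_lt hcount hlt
  obtain ⟨m, hm, hm1, hltm⟩ := exists_true_false_of_prefixOnes_lt hj hltj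
  have hmlen : m + 1 < a.length := by
    by_contra! hle
    rw [prefixOnes_eq_of_length_le hcount hle (by omega)] at hltm
    exact lt_irrefl _ hltm
  obtain ⟨p, q, rfl, rfl⟩ := exists_eq_append_true_false hmlen hm hm1
  have hdom' := prefixOnes_le_exchange hdom hltm
  refine ⟨_, ⟨p, q, rfl, rfl⟩, ?_, ?_, hdom', prefixDist_exchange_add_one hdom hdom' (by omega)⟩
  · simp at ha ⊢; omega
  · simp [List.count_append] at hcount ⊢; omega

end Step

theorem exchangeChain_of_prefixOnes_le {a b : List Bool} {n : ℕ} (ha : a.length = n)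
    (hb : b.length = n) (hcount : a.count true = b.count true)
    (hdom : ∀ k, prefixOnes b k ≤ prefixOnes a k) :
    ExchangeChain a b (prefixDist a b n) := by
  induction hd : prefixDist a b n generalizing a with
  | zero =>
    suffices a = b from this ▸ ExchangeChain.refl a
    refine eq_of_prefixOnes_eq (ha.trans hb.symm) fun k => ?_
    rcases k with _ | k
    · simp [prefixOnes_zero]
    rcases lt_or_ge k n with hk | hk
    · have := (sum_eq_zero_iff.mp hd) k (mem_range.mpr hk)
      omega
    · exact prefixOnes_eq_of_length_le hcount (by omega) (by omega)
  | succ d ih =>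
    obtain ⟨a', hex, ha', hcount', hdom', hdist⟩ :=
      exists_exchange_prefixDist_succ ha hb hcount hdom (by omega)
    exact ExchangeChain.cons hex (ih ha' hcount' hdom' (by omega))

end BinaryWord

/-- If `a, b` are binary words of common length `n` with the same number
of ones, and every prefix of `a` of length `k < n` has at least as many ones as the
corresponding prefix of `b`, then `a` swaps to `b` in exactly
`d(a,b) = Σ_{i=1}^n | |a_{1:i}|₁ - |b_{1:i}|₁ |` exchanges. -/
theorem stmt_4 (n : ℕ) (a b : List Bool) (ha : a.length = n) (hb : b.length = n)
    (hcount : a.count true = b.count true)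
    (hpre : ∀ k < n, (b.take k).count true ≤ (a.take k).count true) :
    ∃ f : ℕ → List Bool, f 0 = a ∧
      f (∑ i ∈ Finset.range n,
          (((a.take (i + 1)).count true : ℤ) - ((b.take (i + 1)).count true : ℤ)).natAbs)
        = b ∧
      ∀ i < ∑ i ∈ Finset.range n,
          (((a.take (i + 1)).count true : ℤ) - ((b.take (i + 1)).count true : ℤ)).natAbs,
        Exchange (f i) (f (i + 1)) := by
  have hdom : ∀ k, BinaryWord.prefixOnes b k ≤ BinaryWord.prefixOnes a k := by
    intro k
    rcases lt_or_ge k n with hk | hk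
    · exact hpre k hk
    · exact (BinaryWord.prefixOnes_eq_of_length_le hcount (by omega) (by omega)).ge
  exact BinaryWord.exchangeChain_of_prefixOnes_le ha hb hcount hdom
end

section
/- Suppose a_1 ≤ ⋯ ≤ a_n and b_1 ≤ ⋯ ≤ b_n are non-decreasing sequences of positive reals with Σ_{i=1}^k a_i ≤ Σ_{i=1}^k b_i for each k = 1,…,n. Suppose for each i the function f_i : (0,∞) → ℝ is non-increasing and convex, and for each i = 2,…,n the difference f_{i−1}(x) − f_i(x) is non-increasing in x. Then Σ_{i=1}^n f_i(a_i) ≥ Σ_{i=1}^n f_i(b_i). -/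
/-!
Fix `δ > 0` so small that no `aᵢ` lies in `(bᵢ - δ, bᵢ)`, and let `cᵢ` be the slope of `fᵢ` on
`[bᵢ - δ, bᵢ]`. Convexity puts the graph of `fᵢ` above that secant line outside the interval, so
`fᵢ(bᵢ) - fᵢ(aᵢ) ≤ cᵢ (bᵢ - aᵢ)`. The slopes increase with `i`: passing from `fᵢ` to `fᵢ₊₁` raises
the slope because `fᵢ - fᵢ₊₁` is non-increasing, and moving the interval right to `bᵢ₊₁` raises it by
convexity. Abel summation against the non-negative partial sums of `bᵢ - aᵢ` then bounds
`∑ cᵢ (bᵢ - aᵢ)` by `cₙ ∑ (bᵢ - aᵢ) ≤ 0`.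
-/

open Finset Filter Topology

section Slope

variable {𝕜 : Type*} [Field 𝕜] [LinearOrder 𝕜] [IsStrictOrderedRing 𝕜] {s : Set 𝕜} {f g : 𝕜 → 𝕜}

theorem ConvexOn.slope_le_slope (hf : ConvexOn 𝕜 s f) {x₁ y₁ x₂ y₂ : 𝕜} (hx₁ : x₁ ∈ s)
    (hy₂ : y₂ ∈ s) (h₁ : x₁ < y₁) (h₂ : x₂ < y₂) (hx : x₁ ≤ x₂) (hy : y₁ ≤ y₂) :
    slope f x₁ y₁ ≤ slope f x₂ y₂ := by
  have hy₁ : y₁ ∈ s := hf.1.ordConnected.out hx₁ hy₂ ⟨h₁.le, hy⟩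
  have hx₂ : x₂ ∈ s := hf.1.ordConnected.out hx₁ hy₂ ⟨hx, h₂.le⟩
  calc slope f x₁ y₁ ≤ slope f x₁ y₂ :=
        hf.slope_mono hx₁ ⟨hy₁, h₁.ne'⟩ ⟨hy₂, (h₁.trans_le hy).ne'⟩ hy
    _ = slope f y₂ x₁ := slope_comm f x₁ y₂
    _ ≤ slope f y₂ x₂ := hf.slope_mono hy₂ ⟨hx₁, (hx.trans_lt h₂).ne⟩ ⟨hx₂, h₂.ne⟩ hx
    _ = slope f x₂ y₂ := slope_comm f y₂ x₂

theorem ConvexOn.sub_le_slope_mul_sub (hf : ConvexOn 𝕜 s f) {u y x : 𝕜} (hu : u ∈ s)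
    (hy : y ∈ s) (hx : x ∈ s) (huy : u < y) (hxuy : x ∉ Set.Ioo u y) :
    f y - f x ≤ slope f u y * (y - x) := by
  rcases lt_trichotomy x y with hxy | rfl | hyx
  · have hxu : x ≤ u := not_lt.1 fun h ↦ hxuy ⟨h, hxy⟩
    calc f y - f x = slope f x y * (y - x) := by
          rw [slope_def_field]; field_simp [(sub_pos.2 hxy).ne']
      _ ≤ slope f u y * (y - x) :=
          mul_le_mul_of_nonneg_right (hf.slope_le_slope hx hy hxy huy hxu le_rfl)
            (sub_pos.2 hxy).le
  · simp
  · calc f y - f x = slope f y x * (y - x) := by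
          rw [slope_def_field]; field_simp [(sub_pos.2 hyx).ne']; ring
      _ ≤ slope f u y * (y - x) :=
          mul_le_mul_of_nonpos_right (hf.slope_le_slope hu hx huy hyx huy.le hyx.le)
            (sub_nonpos.2 hyx.le)

theorem slope_le_slope_of_sub_le_sub {x y : 𝕜} (hxy : x ≤ y) (h : f y - g y ≤ f x - g x) :
    slope f x y ≤ slope g x y := by
  rw [slope_def_field, slope_def_field]
  exact div_le_div_of_nonneg_right (by linarith) (sub_nonneg.2 hxy)

end Slope

theorem sum_Icc_mul_le_mul_sum_Icc {R : Type*} [Semiring R] [PartialOrder R] [IsOrderedRing R]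
    (c e : ℕ → R) {n : ℕ} (hn : 1 ≤ n) (hc : ∀ i, 1 ≤ i → i + 1 ≤ n → c i ≤ c (i + 1))
    (he : ∀ k, 1 ≤ k → k ≤ n → 0 ≤ ∑ i ∈ Icc 1 k, e i) :
    ∑ i ∈ Icc 1 n, c i * e i ≤ c n * ∑ i ∈ Icc 1 n, e i := by
  induction n, hn using Nat.le_induction with
  | base => simp
  | succ n hn ih =>
    rw [sum_Icc_succ_top (by omega), sum_Icc_succ_top (by omega), mul_add]
    gcongr ?_ + _
    calc ∑ i ∈ Icc 1 n, c i * e i ≤ c n * ∑ i ∈ Icc 1 n, e i :=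
          ih (fun i h₁ _ ↦ hc i h₁ (by omega)) (fun k h₁ h₂ ↦ he k h₁ (by omega))
      _ ≤ c (n + 1) * ∑ i ∈ Icc 1 n, e i :=
          mul_le_mul_of_nonneg_right (hc n hn le_rfl) (he n hn (by omega))

theorem exists_pos_lt_and_le_sub {ι : Type*} (s : Finset ι) (a b : ι → ℝ)
    (hb : ∀ i ∈ s, 0 < b i) : ∃ δ > 0, ∀ i ∈ s, δ < b i ∧ (a i < b i → δ ≤ b i - a i) := by
  have h : ∀ i ∈ s, ∀ᶠ δ in 𝓝[>] (0 : ℝ), δ < b i ∧ (a i < b i → δ ≤ b i - a i) := by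
    intro i hi
    refine nhdsWithin_le_nhds ((eventually_lt_nhds (hb i hi)).and ?_)
    by_cases hab : a i < b i
    · exact (eventually_lt_nhds (sub_pos.2 hab)).mono fun δ hδ _ ↦ hδ.le
    · exact Eventually.of_forall fun _ h ↦ absurd h hab
  obtain ⟨δ, hδs, hδ⟩ := (((eventually_all_finset s).2 h).and self_mem_nhdsWithin).exists
  exact ⟨δ, hδ, hδs⟩

theorem stmt_5_general (n : ℕ) (a b : ℕ → ℝ) (f : ℕ → ℝ → ℝ)
    (ha_pos : ∀ i, 1 ≤ i → i ≤ n → 0 < a i)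
    (hb_pos : ∀ i, 1 ≤ i → i ≤ n → 0 < b i)
    (hb_mono : ∀ i, 1 ≤ i → i + 1 ≤ n → b i ≤ b (i + 1))
    (hsum : ∀ k, 1 ≤ k → k ≤ n → ∑ i ∈ Finset.Icc 1 k, a i ≤ ∑ i ∈ Finset.Icc 1 k, b i)
    (hf_anti : ∀ i, 1 ≤ i → i ≤ n → ∀ x y : ℝ, 0 < x → x ≤ y → f i y ≤ f i x)
    (hf_conv : ∀ i, 1 ≤ i → i ≤ n → ConvexOn ℝ (Set.Ioi (0 : ℝ)) (f i))
    (hdiff : ∀ i, 2 ≤ i → i ≤ n → ∀ x y : ℝ, 0 < x → x ≤ y →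
      f (i - 1) y - f i y ≤ f (i - 1) x - f i x) :
    ∑ i ∈ Finset.Icc 1 n, f i (b i) ≤ ∑ i ∈ Finset.Icc 1 n, f i (a i) := by
  rcases Nat.eq_zero_or_pos n with rfl | hn
  · simp
  obtain ⟨δ, hδ, hδb⟩ := exists_pos_lt_and_le_sub (Icc 1 n) a b fun i hi ↦
    hb_pos i (mem_Icc.1 hi).1 (mem_Icc.1 hi).2
  have hbδ : ∀ i, 1 ≤ i → i ≤ n → 0 < b i - δ := fun i h₁ h₂ ↦
    sub_pos.2 (hδb i (mem_Icc.2 ⟨h₁, h₂⟩)).1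
  set c : ℕ → ℝ := fun i ↦ slope (f i) (b i - δ) (b i)
  have hterm : ∀ i ∈ Icc 1 n, f i (b i) - f i (a i) ≤ c i * (b i - a i) := by
    intro i hi
    obtain ⟨h₁, h₂⟩ := mem_Icc.1 hi
    exact (hf_conv i h₁ h₂).sub_le_slope_mul_sub (hbδ i h₁ h₂) (hb_pos i h₁ h₂)
      (ha_pos i h₁ h₂) (sub_lt_self _ hδ) fun h ↦ by linarith [(hδb i hi).2 h.2, h.1]
  have hc_mono : ∀ i, 1 ≤ i → i + 1 ≤ n → c i ≤ c (i + 1) := by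
    intro i h₁ h₂
    have hf_sub := hdiff (i + 1) (by omega) h₂ _ _ (hbδ i h₁ (by omega)) (sub_le_self _ hδ.le)
    rw [Nat.add_sub_cancel] at hf_sub
    calc c i ≤ slope (f (i + 1)) (b i - δ) (b i) :=
          slope_le_slope_of_sub_le_sub (sub_le_self _ hδ.le) hf_sub
      _ ≤ c (i + 1) :=
          (hf_conv (i + 1) (by omega) h₂).slope_le_slope (hbδ i h₁ (by omega))
            (hb_pos (i + 1) (by omega) h₂) (sub_lt_self _ hδ) (sub_lt_self _ hδ)
            (by linarith [hb_mono i h₁ h₂]) (hb_mono i h₁ h₂)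
  have hc_nonpos : c n ≤ 0 := (slope_nonpos_iff_of_le (sub_le_self _ hδ.le)).2
    (hf_anti n hn le_rfl _ _ (hbδ n hn le_rfl) (sub_le_self _ hδ.le))
  have hgap : ∀ k, 1 ≤ k → k ≤ n → 0 ≤ ∑ i ∈ Icc 1 k, (b i - a i) := fun k h₁ h₂ ↦ by
    rw [sum_sub_distrib]; exact sub_nonneg.2 (hsum k h₁ h₂)
  rw [← sub_nonpos, ← sum_sub_distrib]
  calc ∑ i ∈ Icc 1 n, (f i (b i) - f i (a i)) ≤ ∑ i ∈ Icc 1 n, c i * (b i - a i) :=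
        sum_le_sum hterm
    _ ≤ c n * ∑ i ∈ Icc 1 n, (b i - a i) := sum_Icc_mul_le_mul_sum_Icc c _ hn hc_mono hgap
    _ ≤ 0 := mul_nonpos_of_nonpos_of_nonneg hc_nonpos (hgap n hn le_rfl)

/-- (Majorisation inequality.)  If `a₁ ≤ ⋯ ≤ aₙ` and `b₁ ≤ ⋯ ≤ bₙ` are
non-decreasing sequences of positive reals with `Σ_{i≤k} aᵢ ≤ Σ_{i≤k} bᵢ` for each
`k = 1,…,n`, and each `fᵢ : (0,∞) → ℝ` is non-increasing and convex with
`f_{i-1} - fᵢ` non-increasing for `i = 2,…,n`, then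
`Σ fᵢ(aᵢ) ≥ Σ fᵢ(bᵢ)`. -/
theorem stmt_5 (n : ℕ) (a b : ℕ → ℝ) (f : ℕ → ℝ → ℝ)
    (ha_pos : ∀ i, 1 ≤ i → i ≤ n → 0 < a i)
    (hb_pos : ∀ i, 1 ≤ i → i ≤ n → 0 < b i)
    (ha_mono : ∀ i, 1 ≤ i → i + 1 ≤ n → a i ≤ a (i + 1))
    (hb_mono : ∀ i, 1 ≤ i → i + 1 ≤ n → b i ≤ b (i + 1))
    (hsum : ∀ k, 1 ≤ k → k ≤ n → ∑ i ∈ Finset.Icc 1 k, a i ≤ ∑ i ∈ Finset.Icc 1 k, b i)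
    (hf_anti : ∀ i, 1 ≤ i → i ≤ n → ∀ x y : ℝ, 0 < x → x ≤ y → f i y ≤ f i x)
    (hf_conv : ∀ i, 1 ≤ i → i ≤ n → ConvexOn ℝ (Set.Ioi (0 : ℝ)) (f i))
    (hdiff : ∀ i, 2 ≤ i → i ≤ n → ∀ x y : ℝ, 0 < x → x ≤ y →
      f (i - 1) y - f i y ≤ f (i - 1) x - f i x) :
    ∑ i ∈ Finset.Icc 1 n, f i (b i) ≤ ∑ i ∈ Finset.Icc 1 n, f i (a i) :=
  stmt_5_general n a b f ha_pos hb_pos hb_mono hsum hf_anti hf_conv hdiff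
end

section
/- Let I be an interval of ℝ and φ₀, φ₁ : I → I strictly increasing contractive maps with unique fixed points y₁ < y₀ (fixed points of φ₁ and φ₀ respectively). If w is a finite binary word containing at least one 0 and at least one 1, then the unique fixed point y_w of the composition φ_w satisfies y₁ < y_w < y₀. -/
/-!
If `y_w ≤ y₁`, then `y_w` lies below the fixed points of both maps, so contractivity forces
`φ_a(y_w) ≥ y_w` for both letters, strictly for `a = 0` since `y_w < y₀`. Monotonicity makes
`{x ∈ I | y_w ≤ x}` and `{x ∈ I | y_w < x}` invariant under both maps, and the letter `0` of `w`
moves `y_w` into the second set, so `φ_w(y_w) > y_w`. The case `y₀ ≤ y_w` is symmetric,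
with the letter `1` doing the strict step.
-/

/-- `comp φ w` is the composition `φ_w`, applying the map for the first letter of `w`
first (`false` = letter 0, `true` = letter 1). -/
def comp (φ : Bool → ℝ → ℝ) (w : List Bool) : ℝ → ℝ :=
  w.foldl (fun g a => φ a ∘ g) id

open Set

def ContractiveOn (f : ℝ → ℝ) (I : Set ℝ) : Prop :=
  ∀ x ∈ I, ∀ y ∈ I, x < y → f y - f x < y - x

namespace ContractiveOn

variable {f : ℝ → ℝ} {I : Set ℝ} {p x : ℝ}

theorem lt_apply_of_lt_fixedPoint (hf : ContractiveOn f I) (hp : p ∈ I) (hfp : f p = p)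
    (hx : x ∈ I) (hxp : x < p) : x < f x := by
  have := hf x hx p hp hxp
  rw [hfp] at this
  linarith

theorem le_apply_of_le_fixedPoint (hf : ContractiveOn f I) (hp : p ∈ I) (hfp : f p = p)
    (hx : x ∈ I) (hxp : x ≤ p) : x ≤ f x := by
  rcases hxp.lt_or_eq with hxp | rfl
  · exact (hf.lt_apply_of_lt_fixedPoint hp hfp hx hxp).le
  · exact hfp.ge

theorem apply_lt_of_fixedPoint_lt (hf : ContractiveOn f I) (hp : p ∈ I) (hfp : f p = p)
    (hx : x ∈ I) (hpx : p < x) : f x < x := by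
  have := hf p hp x hx hpx
  rw [hfp] at this
  linarith

theorem apply_le_of_fixedPoint_le (hf : ContractiveOn f I) (hp : p ∈ I) (hfp : f p = p)
    (hx : x ∈ I) (hpx : p ≤ x) : f x ≤ x := by
  rcases hpx.lt_or_eq with hpx | rfl
  · exact (hf.apply_lt_of_fixedPoint_lt hp hfp hx hpx).le
  · exact hfp.le

end ContractiveOn

section comp

variable {φ : Bool → ℝ → ℝ}

theorem foldl_comp_eq (w : List Bool) (g : ℝ → ℝ) :
    w.foldl (fun g a => φ a ∘ g) g = comp φ w ∘ g := by
  induction w generalizing g with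
  | nil => rfl
  | cons a w ih =>
    change w.foldl _ (φ a ∘ g) = w.foldl _ (φ a ∘ id) ∘ g
    rw [ih, ih]
    rfl

theorem comp_append (u v : List Bool) : comp φ (u ++ v) = comp φ v ∘ comp φ u := by
  rw [comp, List.foldl_append, foldl_comp_eq]
  rfl

theorem mapsTo_comp {S : Set ℝ} (hS : ∀ a, MapsTo (φ a) S S) (w : List Bool) :
    MapsTo (comp φ w) S S := by
  induction w using List.reverseRecOn with
  | nil => exact mapsTo_id S
  | append_singleton w a ih =>
    rw [comp_append]
    exact (hS a).comp ih

theorem mapsTo_comp_of_mem {S T : Set ℝ} {b : Bool} {w : List Bool}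
    (hS : ∀ a, MapsTo (φ a) S S) (hT : ∀ a, MapsTo (φ a) T T) (hb : MapsTo (φ b) S T)
    (hw : b ∈ w) : MapsTo (comp φ w) S T := by
  obtain ⟨u, v, rfl⟩ := List.append_of_mem hw
  rw [comp_append, ← List.singleton_append, comp_append]
  exact (mapsTo_comp hT v).comp (hb.comp (mapsTo_comp hS u))

variable {I : Set ℝ} {x : ℝ} {b : Bool} {w : List Bool}

theorem lt_comp_self (hmaps : ∀ a, MapsTo (φ a) I I) (hmono : ∀ a, StrictMonoOn (φ a) I)
    (hx : x ∈ I) (hle : ∀ a, x ≤ φ a x) (hb : x < φ b x) (hw : b ∈ w) :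
    x < comp φ w x := by
  refine (mapsTo_comp_of_mem (S := I ∩ Ici x) (T := I ∩ Ioi x) ?_ ?_ ?_ hw ⟨hx, self_mem_Ici⟩).2
  · exact fun a v ⟨hv, hxv⟩ ↦ ⟨hmaps a hv, (hle a).trans ((hmono a).monotoneOn hx hv hxv)⟩
  · exact fun a v ⟨hv, hxv⟩ ↦ ⟨hmaps a hv, (hle a).trans_lt (hmono a hx hv hxv)⟩
  · exact fun v ⟨hv, hxv⟩ ↦ ⟨hmaps b hv, hb.trans_le ((hmono b).monotoneOn hx hv hxv)⟩

theorem comp_self_lt (hmaps : ∀ a, MapsTo (φ a) I I) (hmono : ∀ a, StrictMonoOn (φ a) I)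
    (hx : x ∈ I) (hle : ∀ a, φ a x ≤ x) (hb : φ b x < x) (hw : b ∈ w) :
    comp φ w x < x := by
  refine (mapsTo_comp_of_mem (S := I ∩ Iic x) (T := I ∩ Iio x) ?_ ?_ ?_ hw ⟨hx, self_mem_Iic⟩).2
  · exact fun a v ⟨hv, hvx⟩ ↦ ⟨hmaps a hv, ((hmono a).monotoneOn hv hx hvx).trans (hle a)⟩
  · exact fun a v ⟨hv, hvx⟩ ↦ ⟨hmaps a hv, (hmono a hv hx hvx).trans_le (hle a)⟩
  · exact fun v ⟨hv, hvx⟩ ↦ ⟨hmaps b hv, ((hmono b).monotoneOn hv hx hvx).trans_lt hb⟩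

end comp

theorem stmt_8_general (I : Set ℝ) (φ : Bool → ℝ → ℝ)
    (hmaps : ∀ a, Set.MapsTo (φ a) I I)
    (hinc : ∀ a, ∀ x ∈ I, ∀ y ∈ I, x < y → φ a x < φ a y)
    (hcontr : ∀ a, ∀ x ∈ I, ∀ y ∈ I, x < y → φ a y - φ a x < y - x)
    (y0 y1 : ℝ) (hy0I : y0 ∈ I) (hy1I : y1 ∈ I)
    (hfix0 : φ false y0 = y0)
    (hfix1 : φ true y1 = y1)
    (hlt : y1 < y0)
    (w : List Bool) (h0 : false ∈ w) (h1 : true ∈ w)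
    (yw : ℝ) (hywI : yw ∈ I) (hfixw : comp φ w yw = yw) :
    y1 < yw ∧ yw < y0 := by
  have hmono : ∀ a, StrictMonoOn (φ a) I := fun a x hx y hy ↦ hinc a x hx y hy
  have hcon : ∀ a, ContractiveOn (φ a) I := hcontr
  constructor
  · by_contra! hle1
    have hlt0 : yw < y0 := hle1.trans_lt hlt
    have hle : ∀ a, yw ≤ φ a yw := by
      intro a
      cases a
      · exact (hcon false).le_apply_of_le_fixedPoint hy0I hfix0 hywI hlt0.le
      · exact (hcon true).le_apply_of_le_fixedPoint hy1I hfix1 hywI hle1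
    have := lt_comp_self hmaps hmono hywI hle
      ((hcon false).lt_apply_of_lt_fixedPoint hy0I hfix0 hywI hlt0) h0
    exact this.ne' hfixw
  · by_contra! hge0
    have hgt1 : y1 < yw := hlt.trans_le hge0
    have hge : ∀ a, φ a yw ≤ yw := by
      intro a
      cases a
      · exact (hcon false).apply_le_of_fixedPoint_le hy0I hfix0 hywI hge0
      · exact (hcon true).apply_le_of_fixedPoint_le hy1I hfix1 hywI hgt1.le
    have := comp_self_lt hmaps hmono hywI hge
      ((hcon true).apply_lt_of_fixedPoint_lt hy1I hfix1 hywI hgt1) h1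
    exact this.ne hfixw

/-- Under Assumption A1 (strictly increasing contractive maps `φ₀, φ₁`
on an interval `I` with unique fixed points `y₁ < y₀`), if the finite word `w` contains
at least one `0` and at least one `1`, then any fixed point `y_w ∈ I` of `φ_w`
satisfies `y₁ < y_w < y₀`. -/
theorem stmt_8 (I : Set ℝ) (hI : I.OrdConnected) (φ : Bool → ℝ → ℝ)
    (hmaps : ∀ a, Set.MapsTo (φ a) I I)
    (hinc : ∀ a, ∀ x ∈ I, ∀ y ∈ I, x < y → φ a x < φ a y)
    (hcontr : ∀ a, ∀ x ∈ I, ∀ y ∈ I, x < y → φ a y - φ a x < y - x)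
    (y0 y1 : ℝ) (hy0I : y0 ∈ I) (hy1I : y1 ∈ I)
    (hfix0 : φ false y0 = y0) (huniq0 : ∀ z ∈ I, φ false z = z → z = y0)
    (hfix1 : φ true y1 = y1) (huniq1 : ∀ z ∈ I, φ true z = z → z = y1)
    (hlt : y1 < y0)
    (w : List Bool) (h0 : false ∈ w) (h1 : true ∈ w)
    (yw : ℝ) (hywI : yw ∈ I) (hfixw : comp φ w yw = yw) :
    y1 < yw ∧ yw < y0 :=
  stmt_8_general I φ hmaps hinc hcontr y0 y1 hy0I hy1I hfix0 hfix1 hlt w h0 h1 yw hywI hfixw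
end

section
/- Let I be an interval of ℝ, φ₀, φ₁ : I → I strictly increasing contractive maps with fixed points y₁ < y₀. For x ∈ I let π(x) be the x-threshold word. Then: π(x) = 1 iff x ≤ y₁; π(x) = 01 iff x ∈ [y_{01}, y_{10}]; π(x) = 0 iff x ≥ y₀, where y_{01} and y_{10} are the unique fixed points of φ₁∘φ₀ and φ₀∘φ₁ respectively. -/
/-!
Between the two fixed points, `φ₁ z < φ₀ z`; so while the orbit stays in `[y₁, y₀]`, the letter
of any word it follows is forced to be the threshold letter `[x ≤ X k]`. An increasing strict
contraction moves each point monotonically towards its fixed point, and its orbits converge to it.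
If the orbit followed `1^ω` with `x > y₁`, it would converge to `y₁` and eventually drop below `x`
inside `[y₁, y₀]`, where the letter must be `0`; symmetrically for `0^ω` with `x < y₀`. For
`(01)^ω` the odd and even subsequences are orbits of `φ₁ ∘ φ₀` and `φ₀ ∘ φ₁`, converging to `y₀₁`
and `y₁₀`, which forces `y₀₁ ≤ x ≤ y₁₀`. Conversely, in each of the three ranges of `x` an
invariant of the orbit shows that it follows the claimed word; minimality is automatic for one
letter, and for `01` it follows from `y₁ < y₀₁` and `y₁₀ < y₀`.
-/

def periodLetter (w : List Bool) (k : ℕ) : Bool :=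
  w.getD ((k - 1) % w.length) false

def IsThresholdWord (φ0 φ1 : ℝ → ℝ) (X : ℕ → ℝ) (w : List Bool) : Prop :=
  w ≠ [] ∧
  (∀ k, 1 ≤ k → X (k + 1) = if periodLetter w k then φ1 (X k) else φ0 (X k)) ∧
  ∀ v : List Bool, v ≠ [] →
    (∀ k, 1 ≤ k → X (k + 1) = if periodLetter v k then φ1 (X k) else φ0 (X k)) →
    w.length ≤ v.length

open Set Filter Topology

structure StrictMonoContractionOn (f : ℝ → ℝ) (I : Set ℝ) : Prop where
  mapsTo : MapsTo f I I
  strictMonoOn : StrictMonoOn f I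
  sub_lt_sub : ∀ x ∈ I, ∀ y ∈ I, x < y → f y - f x < y - x

theorem Set.MapsTo.mem_of_step {S : Set ℝ} {f : ℝ → ℝ} {u : ℕ → ℝ} (hS : MapsTo f S S)
    (hstep : ∀ n, u (n + 1) = f (u n)) (h0 : u 0 ∈ S) : ∀ n, u n ∈ S
  | 0 => h0
  | n + 1 => hstep n ▸ hS (hS.mem_of_step hstep h0 n)

namespace StrictMonoContractionOn

variable {f g : ℝ → ℝ} {I : Set ℝ} {p z : ℝ}

theorem comp (hg : StrictMonoContractionOn g I) (hf : StrictMonoContractionOn f I) :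
    StrictMonoContractionOn (g ∘ f) I where
  mapsTo := hg.mapsTo.comp hf.mapsTo
  strictMonoOn := hg.strictMonoOn.comp hf.strictMonoOn hf.mapsTo
  sub_lt_sub x hx y hy hxy := by
    have := hg.sub_lt_sub _ (hf.mapsTo hx) _ (hf.mapsTo hy) (hf.strictMonoOn hx hy hxy)
    have := hf.sub_lt_sub x hx y hy hxy
    simp only [Function.comp_apply]
    linarith

theorem lt_apply_of_lt (hf : StrictMonoContractionOn f I) (hz : z ∈ I) (hp : p ∈ I)
    (hfix : f p = p) (h : z < p) : z < f z := by
  have := hf.sub_lt_sub z hz p hp h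
  linarith

theorem apply_lt_of_lt (hf : StrictMonoContractionOn f I) (hz : z ∈ I) (hp : p ∈ I)
    (hfix : f p = p) (h : p < z) : f z < z := by
  have := hf.sub_lt_sub p hp z hz h
  linarith

theorem le_apply_of_le (hf : StrictMonoContractionOn f I) (hz : z ∈ I) (hp : p ∈ I)
    (hfix : f p = p) (h : z ≤ p) : z ≤ f z := by
  rcases h.lt_or_eq with h | rfl
  exacts [(hf.lt_apply_of_lt hz hp hfix h).le, hfix.ge]

theorem apply_le_of_le (hf : StrictMonoContractionOn f I) (hz : z ∈ I) (hp : p ∈ I)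
    (hfix : f p = p) (h : p ≤ z) : f z ≤ z := by
  rcases h.lt_or_eq with h | rfl
  exacts [(hf.apply_lt_of_lt hz hp hfix h).le, hfix.le]

theorem eq_of_fixed {a b : ℝ} (hf : StrictMonoContractionOn f I) (ha : a ∈ I) (hb : b ∈ I)
    (hfa : f a = a) (hfb : f b = b) : a = b := by
  by_contra hab
  rcases lt_or_gt_of_ne hab with h | h
  · exact (hf.lt_apply_of_lt ha hb hfb h).ne' hfa
  · exact (hf.apply_lt_of_lt ha hb hfb h).ne hfa

theorem dist_apply_le (hf : StrictMonoContractionOn f I) {a b : ℝ} (ha : a ∈ I) (hb : b ∈ I) :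
    dist (f a) (f b) ≤ dist a b := by
  wlog hab : a < b generalizing a b
  · rcases (not_lt.1 hab).lt_or_eq with h | rfl
    · simpa only [dist_comm] using this hb ha h
    · simp
  have := hf.strictMonoOn ha hb hab
  have := hf.sub_lt_sub a ha b hb hab
  rw [dist_comm, dist_comm a, Real.dist_eq, Real.dist_eq, abs_of_pos (by linarith),
    abs_of_pos (by linarith)]
  exact this.le

theorem continuousOn (hf : StrictMonoContractionOn f I) : ContinuousOn f I :=
  (LipschitzOnWith.of_dist_le_mul (K := 1) fun _ ha _ hb => by
    simpa using hf.dist_apply_le ha hb).continuousOn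

theorem mapsTo_Icc (hf : StrictMonoContractionOn f I) (hp : p ∈ I) (hfix : f p = p) {a b : ℝ}
    (ha : a ≤ p) (hb : p ≤ b) : MapsTo f (I ∩ Icc a b) (I ∩ Icc a b) := by
  rintro z ⟨hz, haz, hzb⟩
  refine ⟨hf.mapsTo hz, ?_⟩
  rcases le_total z p with h | h
  · have := hf.strictMonoOn.monotoneOn hz hp h
    exact ⟨haz.trans (hf.le_apply_of_le hz hp hfix h), by linarith⟩
  · have := hf.strictMonoOn.monotoneOn hp hz h
    exact ⟨by linarith, (hf.apply_le_of_le hz hp hfix h).trans hzb⟩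

theorem isFixedPt_of_tendsto (hf : StrictMonoContractionOn f I) {u : ℕ → ℝ} {L : ℝ}
    (hstep : ∀ n, u (n + 1) = f (u n)) (hu : ∀ n, u n ∈ I) (hL : L ∈ I)
    (htend : Tendsto u atTop (𝓝 L)) : f L = L := by
  have hfu : Tendsto (f ∘ u) atTop (𝓝 (f L)) :=
    (hf.continuousOn L hL).tendsto.comp
      (tendsto_nhdsWithin_iff.2 ⟨htend, Eventually.of_forall hu⟩)
  have hshift : Tendsto (f ∘ u) atTop (𝓝 L) := by
    simpa only [Function.comp_def, ← hstep] using htend.comp (tendsto_add_atTop_nat 1)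
  exact tendsto_nhds_unique hfu hshift

theorem tendsto_of_step (hf : StrictMonoContractionOn f I) (hI : I.OrdConnected) (hp : p ∈ I)
    (hfix : f p = p) {u : ℕ → ℝ} (hstep : ∀ n, u (n + 1) = f (u n)) (h0 : u 0 ∈ I) :
    Tendsto u atTop (𝓝 p) := by
  have hS : ∀ n, u n ∈ I ∩ uIcc (u 0) p :=
    (hf.mapsTo_Icc hp hfix inf_le_right le_sup_right).mem_of_step hstep ⟨h0, left_mem_uIcc⟩
  have hrange : range u ⊆ uIcc (u 0) p := range_subset_iff.2 fun n => (hS n).2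
  obtain ⟨L, hL⟩ : ∃ L, Tendsto u atTop (𝓝 L) := by
    rcases le_total (u 0) p with h | h
    · refine ⟨_, tendsto_atTop_ciSup (monotone_nat_of_le_succ fun n => ?_)
        (bddAbove_Icc.mono hrange)⟩
      have hn : u n ≤ p := (uIcc_of_le h ▸ (hS n).2 : u n ∈ Icc (u 0) p).2
      exact hstep n ▸ hf.le_apply_of_le (hS n).1 hp hfix hn
    · refine ⟨_, tendsto_atTop_ciInf (antitone_nat_of_succ_le fun n => ?_)
        (bddBelow_Icc.mono hrange)⟩
      have hn : p ≤ u n := (uIcc_of_ge h ▸ (hS n).2 : u n ∈ Icc p (u 0)).1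
      exact hstep n ▸ hf.apply_le_of_le (hS n).1 hp hfix hn
  have hLI : L ∈ I :=
    hI.uIcc_subset h0 hp (isClosed_Icc.mem_of_tendsto hL (Eventually.of_forall fun n => (hS n).2))
  rwa [hf.eq_of_fixed hLI hp (hf.isFixedPt_of_tendsto hstep (fun n => (hS n).1) hLI hL) hfix] at hL

end StrictMonoContractionOn

def IsThresholdOrbit (φ0 φ1 : ℝ → ℝ) (x : ℝ) (X : ℕ → ℝ) : Prop :=
  X 1 = φ1 x ∧ ∀ k, 1 ≤ k → X (k + 1) = if x ≤ X k then φ1 (X k) else φ0 (X k)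

def FollowsWord (φ0 φ1 : ℝ → ℝ) (X : ℕ → ℝ) (w : List Bool) : Prop :=
  ∀ k, 1 ≤ k → X (k + 1) = if periodLetter w k then φ1 (X k) else φ0 (X k)

@[simp]
theorem periodLetter_singleton (b : Bool) (k : ℕ) : periodLetter [b] k = b := by
  simp [periodLetter, Nat.mod_one]

@[simp]
theorem periodLetter_pair_odd (m : ℕ) : periodLetter [false, true] (2 * m + 1) = false := by
  simp [periodLetter]

@[simp]
theorem periodLetter_pair_even (m : ℕ) : periodLetter [false, true] (2 * m + 2) = true := by
  simp [periodLetter]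

section ThresholdWord

variable {φ0 φ1 : ℝ → ℝ} {X : ℕ → ℝ}

theorem isThresholdWord_singleton_iff (b : Bool) :
    IsThresholdWord φ0 φ1 X [b] ↔ FollowsWord φ0 φ1 X [b] :=
  ⟨fun h => h.2.1, fun h => ⟨List.cons_ne_nil _ _, h, fun _ hv _ => List.length_pos_iff.2 hv⟩⟩

theorem isThresholdWord_pair_iff :
    IsThresholdWord φ0 φ1 X [false, true] ↔ FollowsWord φ0 φ1 X [false, true] ∧
      ¬FollowsWord φ0 φ1 X [false] ∧ ¬FollowsWord φ0 φ1 X [true] := by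
  refine ⟨fun ⟨_, hw, hmin⟩ => ⟨hw, fun h => ?_, fun h => ?_⟩,
    fun ⟨hw, h0, h1⟩ => ⟨List.cons_ne_nil _ _, hw, fun v hv hfv => ?_⟩⟩
  · simpa using hmin [false] (List.cons_ne_nil _ _) h
  · simpa using hmin [true] (List.cons_ne_nil _ _) h
  · by_contra! hlt
    obtain ⟨b, rfl⟩ : ∃ b, v = [b] :=
      List.length_eq_one_iff.1 (by have := List.length_pos_iff.2 hv; simp at hlt; omega)
    cases b
    exacts [h0 hfv, h1 hfv]

end ThresholdWord

namespace IsThresholdOrbit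

variable {φ0 φ1 : ℝ → ℝ} {x : ℝ} {X : ℕ → ℝ}

theorem mem_of_mapsTo (hX : IsThresholdOrbit φ0 φ1 x X) {S : Set ℝ}
    (h0 : MapsTo φ0 (S ∩ Iio x) S) (h1 : MapsTo φ1 (S ∩ Ici x) S) (hX1 : X 1 ∈ S) :
    ∀ k, 1 ≤ k → X k ∈ S := by
  intro k hk
  induction k, hk using Nat.le_induction with
  | base => exact hX1
  | succ k hk ih =>
    rw [hX.2 k hk]
    split_ifs with h
    exacts [h1 ⟨ih, h⟩, h0 ⟨ih, not_le.1 h⟩]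

theorem followsWord_of_letter (hX : IsThresholdOrbit φ0 φ1 x X) {w : List Bool}
    (h : ∀ k, 1 ≤ k → (periodLetter w k = true ↔ x ≤ X k)) : FollowsWord φ0 φ1 X w :=
  fun k hk => by simp only [hX.2 k hk, h k hk]

theorem followsWord_pair (hX : IsThresholdOrbit φ0 φ1 x X)
    (h : ∀ m, X (2 * m + 1) < x ∧ x ≤ X (2 * m + 2)) : FollowsWord φ0 φ1 X [false, true] := by
  refine hX.followsWord_of_letter fun k hk => ?_
  obtain ⟨m, rfl | rfl⟩ : ∃ m, k = 2 * m + 1 ∨ k = 2 * m + 2 := ⟨(k - 1) / 2, by omega⟩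
  · simpa using (h m).1
  · simpa using (h m).2

theorem letter_iff (hX : IsThresholdOrbit φ0 φ1 x X) {w : List Bool}
    (hw : FollowsWord φ0 φ1 X w) {k : ℕ} (hk : 1 ≤ k) (hsep : φ1 (X k) < φ0 (X k)) :
    periodLetter w k = true ↔ x ≤ X k := by
  have h := (hX.2 k hk).symm.trans (hw k hk)
  by_cases hxk : x ≤ X k <;> cases hb : periodLetter w k <;> simp [hxk, hb] at h ⊢ <;> linarith

theorem followsWord_true_of_le {I : Set ℝ} {y1 : ℝ} (hX : IsThresholdOrbit φ0 φ1 x X)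
    (h1 : StrictMonoContractionOn φ1 I) (hy1 : y1 ∈ I) (hfix1 : φ1 y1 = y1) (hx : x ∈ I)
    (hxy1 : x ≤ y1) : FollowsWord φ0 φ1 X [true] := by
  have hS : MapsTo φ1 (I ∩ Icc x y1) (I ∩ Icc x y1) := h1.mapsTo_Icc hy1 hfix1 hxy1 le_rfl
  have hmem := hX.mem_of_mapsTo (fun z hz => absurd hz.2 (not_lt.2 hz.1.2.1))
    (hS.mono_left inter_subset_left) (hX.1 ▸ hS ⟨hx, le_rfl, hxy1⟩)
  exact hX.followsWord_of_letter fun k hk => by simpa using (hmem k hk).2.1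

end IsThresholdOrbit

structure IsContractivePair (I : Set ℝ) (φ0 φ1 : ℝ → ℝ) (y0 y1 : ℝ) : Prop where
  contr0 : StrictMonoContractionOn φ0 I
  contr1 : StrictMonoContractionOn φ1 I
  mem0 : y0 ∈ I
  mem1 : y1 ∈ I
  fixed0 : φ0 y0 = y0
  fixed1 : φ1 y1 = y1
  lt : y1 < y0

namespace IsContractivePair

variable {I : Set ℝ} {φ0 φ1 : ℝ → ℝ} {y0 y1 x : ℝ} {X : ℕ → ℝ}

theorem apply_lt_apply (S : IsContractivePair I φ0 φ1 y0 y1) {z : ℝ} (hz : z ∈ I)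
    (hz' : z ∈ Icc y1 y0) : φ1 z < φ0 z := by
  rcases lt_or_ge y1 z with h | h
  · exact (S.contr1.apply_lt_of_lt hz S.mem1 S.fixed1 h).trans_le
      (S.contr0.le_apply_of_le hz S.mem0 S.fixed0 hz'.2)
  · exact (S.contr1.apply_le_of_le hz S.mem1 S.fixed1 hz'.1).trans_lt
      (S.contr0.lt_apply_of_lt hz S.mem0 S.fixed0 (h.trans_lt S.lt))

theorem fixed1_lt_of_comp_fixed (S : IsContractivePair I φ0 φ1 y0 y1) {y01 : ℝ}
    (hy01 : y01 ∈ I) (hfix01 : φ1 (φ0 y01) = y01) : y1 < y01 := by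
  by_contra! h
  have hlt : y1 < φ1 (φ0 y1) := calc
    y1 = φ1 y1 := S.fixed1.symm
    _ < φ1 (φ0 y1) := S.contr1.strictMonoOn S.mem1 (S.contr0.mapsTo S.mem1)
      (S.contr0.lt_apply_of_lt S.mem1 S.mem0 S.fixed0 S.lt)
  exact hlt.not_ge ((S.contr1.comp S.contr0).apply_le_of_le S.mem1 hy01 hfix01 h)

theorem lt_fixed0_of_comp_fixed (S : IsContractivePair I φ0 φ1 y0 y1) {y10 : ℝ}
    (hy10 : y10 ∈ I) (hfix10 : φ0 (φ1 y10) = y10) : y10 < y0 := by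
  by_contra! h
  have hlt : φ0 (φ1 y0) < y0 := calc
    φ0 (φ1 y0) < φ0 y0 := S.contr0.strictMonoOn (S.contr1.mapsTo S.mem0) S.mem0
      (S.contr1.apply_lt_of_lt S.mem0 S.mem1 S.fixed1 S.lt)
    _ = y0 := S.fixed0
  exact hlt.not_ge ((S.contr0.comp S.contr1).le_apply_of_le S.mem0 hy10 hfix10 h)

theorem followsWord_false_of_le (S : IsContractivePair I φ0 φ1 y0 y1)
    (hX : IsThresholdOrbit φ0 φ1 x X) (hx : x ∈ I) (hxy0 : y0 ≤ x) :
    FollowsWord φ0 φ1 X [false] := by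
  have hS : MapsTo φ0 (I ∩ Iio x) (I ∩ Iio x) := fun z hz =>
    ⟨S.contr0.mapsTo hz.1, (S.contr0.strictMonoOn hz.1 hx hz.2).trans_le
      (S.contr0.apply_le_of_le hx S.mem0 S.fixed0 hxy0)⟩
  have hX1 : X 1 ∈ I ∩ Iio x := hX.1 ▸
    ⟨S.contr1.mapsTo hx, S.contr1.apply_lt_of_lt hx S.mem1 S.fixed1 (S.lt.trans_le hxy0)⟩
  have hmem := hX.mem_of_mapsTo (hS.mono_left inter_subset_left)
    (fun z hz => (not_lt_of_ge (mem_Ici.1 hz.2) (mem_Iio.1 hz.1.2)).elim) hX1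
  exact hX.followsWord_of_letter fun k hk => by simpa using (hmem k hk).2

theorem le_of_followsWord_true (S : IsContractivePair I φ0 φ1 y0 y1) (hI : I.OrdConnected)
    (hX : IsThresholdOrbit φ0 φ1 x X) (hx : x ∈ I) (hw : FollowsWord φ0 φ1 X [true]) :
    x ≤ y1 := by
  by_contra! hy1x
  have hstep : ∀ n, X (n + 1 + 1) = φ1 (X (n + 1)) := fun n => by
    simpa using hw (n + 1) (by omega)
  have hX1 : X 1 ∈ I ∩ Icc y1 (X 1) := by
    rw [hX.1]
    refine ⟨S.contr1.mapsTo hx, ?_, le_rfl⟩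
    simpa only [S.fixed1] using S.contr1.strictMonoOn.monotoneOn S.mem1 hx hy1x.le
  have hmem : ∀ n, X (n + 1) ∈ I ∩ Icc y1 (X 1) :=
    (S.contr1.mapsTo_Icc S.mem1 S.fixed1 le_rfl hX1.2.1).mem_of_step
      (u := fun n => X (n + 1)) hstep hX1
  have hlim := S.contr1.tendsto_of_step (u := fun n => X (n + 1)) hI S.mem1 S.fixed1 hstep hX1.1
  obtain ⟨n, hn⟩ := (hlim.eventually_lt_const (lt_min hy1x S.lt)).exists
  rw [lt_min_iff] at hn
  have hletter := hX.letter_iff hw (Nat.le_add_left 1 n)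
    (S.apply_lt_apply (hmem n).1 ⟨(hmem n).2.1, hn.2.le⟩)
  simp only [periodLetter_singleton, true_iff] at hletter
  exact hletter.not_gt hn.1

theorem le_of_followsWord_false (S : IsContractivePair I φ0 φ1 y0 y1) (hI : I.OrdConnected)
    (hX : IsThresholdOrbit φ0 φ1 x X) (hx : x ∈ I) (hw : FollowsWord φ0 φ1 X [false]) :
    y0 ≤ x := by
  by_contra! hxy0
  have hstep : ∀ n, X (n + 1 + 1) = φ0 (X (n + 1)) := fun n => by
    simpa using hw (n + 1) (by omega)
  have hX1 : X 1 ∈ I ∩ Icc (X 1) y0 := by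
    rw [hX.1]
    exact ⟨S.contr1.mapsTo hx, le_rfl, (S.contr1.strictMonoOn.monotoneOn hx S.mem0 hxy0.le).trans
      (S.contr1.apply_le_of_le S.mem0 S.mem1 S.fixed1 S.lt.le)⟩
  have hmem : ∀ n, X (n + 1) ∈ I ∩ Icc (X 1) y0 :=
    (S.contr0.mapsTo_Icc S.mem0 S.fixed0 hX1.2.2 le_rfl).mem_of_step
      (u := fun n => X (n + 1)) hstep hX1
  have hlim := S.contr0.tendsto_of_step (u := fun n => X (n + 1)) hI S.mem0 S.fixed0 hstep hX1.1
  obtain ⟨n, hn⟩ := (hlim.eventually_const_lt (max_lt hxy0 S.lt)).exists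
  rw [max_lt_iff] at hn
  have hletter := hX.letter_iff hw (Nat.le_add_left 1 n)
    (S.apply_lt_apply (hmem n).1 ⟨hn.2.le, (hmem n).2.2⟩)
  simp only [periodLetter_singleton, Bool.false_eq_true, false_iff, not_le] at hletter
  exact hletter.not_gt hn.1

theorem followsWord_pair_of_mem_Icc (S : IsContractivePair I φ0 φ1 y0 y1)
    (hX : IsThresholdOrbit φ0 φ1 x X) (hx : x ∈ I) {y01 y10 : ℝ} (hy01 : y01 ∈ I)
    (hfix01 : φ1 (φ0 y01) = y01) (hy10 : y10 ∈ I) (hfix10 : φ0 (φ1 y10) = y10)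
    (hxI : x ∈ Icc y01 y10) : FollowsWord φ0 φ1 X [false, true] := by
  have hmem : ∀ k, 1 ≤ k → X k ∈ I := hX.mem_of_mapsTo
    (S.contr0.mapsTo.mono_left inter_subset_left) (S.contr1.mapsTo.mono_left inter_subset_left)
    (hX.1 ▸ S.contr1.mapsTo hx)
  have heven : ∀ m, φ1 x ≤ X (2 * m + 1) → X (2 * m + 1) < x →
      X (2 * m + 2) = φ0 (X (2 * m + 1)) ∧ x ≤ X (2 * m + 2) := fun m hlo hhi => by
    have hnext : X (2 * m + 2) = φ0 (X (2 * m + 1)) := by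
      simpa [hhi.not_ge] using hX.2 (2 * m + 1) (by omega)
    refine ⟨hnext, ?_⟩
    calc x ≤ φ0 (φ1 x) := (S.contr0.comp S.contr1).le_apply_of_le hx hy10 hfix10 hxI.2
      _ ≤ φ0 (X (2 * m + 1)) :=
        S.contr0.strictMonoOn.monotoneOn (S.contr1.mapsTo hx) (hmem _ (by omega)) hlo
      _ = X (2 * m + 2) := hnext.symm
  have hodd : ∀ m, φ1 x ≤ X (2 * m + 1) ∧ X (2 * m + 1) < x := by
    intro m
    induction m with
    | zero => exact ⟨hX.1.ge, hX.1 ▸ S.contr1.apply_lt_of_lt hx S.mem1 S.fixed1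
        ((S.fixed1_lt_of_comp_fixed hy01 hfix01).trans_le hxI.1)⟩
    | succ m ih =>
      obtain ⟨hnext, hxle⟩ := heven m ih.1 ih.2
      have hstep : X (2 * (m + 1) + 1) = φ1 (X (2 * m + 2)) := by
        rw [show 2 * (m + 1) + 1 = 2 * m + 2 + 1 by ring]
        simpa [hxle] using hX.2 (2 * m + 2) (by omega)
      refine ⟨hstep ▸ S.contr1.strictMonoOn.monotoneOn hx (hmem _ (by omega)) hxle, ?_⟩
      calc X (2 * (m + 1) + 1) = φ1 (φ0 (X (2 * m + 1))) := by rw [hstep, hnext]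
        _ < φ1 (φ0 x) := (S.contr1.comp S.contr0).strictMonoOn (hmem _ (by omega)) hx ih.2
        _ ≤ x := (S.contr1.comp S.contr0).apply_le_of_le hx hy01 hfix01 hxI.1
  exact hX.followsWord_pair fun m => ⟨(hodd m).2, (heven m (hodd m).1 (hodd m).2).2⟩

theorem mem_Icc_of_followsWord_pair (S : IsContractivePair I φ0 φ1 y0 y1) (hI : I.OrdConnected)
    (hX : IsThresholdOrbit φ0 φ1 x X) (hx : x ∈ I) {y01 y10 : ℝ} (hy01 : y01 ∈ I)
    (hfix01 : φ1 (φ0 y01) = y01) (hy10 : y10 ∈ I) (hfix10 : φ0 (φ1 y10) = y10)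
    (hw : FollowsWord φ0 φ1 X [false, true]) (hy1x : y1 < x) (hxy0 : x < y0) :
    x ∈ Icc y01 y10 := by
  have hJ : ∀ k, 1 ≤ k → X k ∈ I ∩ Icc y1 y0 := hX.mem_of_mapsTo
    ((S.contr0.mapsTo_Icc S.mem0 S.fixed0 S.lt.le le_rfl).mono_left inter_subset_left)
    ((S.contr1.mapsTo_Icc S.mem1 S.fixed1 le_rfl S.lt.le).mono_left inter_subset_left)
    (hX.1 ▸ S.contr1.mapsTo_Icc S.mem1 S.fixed1 le_rfl S.lt.le ⟨hx, hy1x.le, hxy0.le⟩)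
  have hletter : ∀ k, 1 ≤ k → (periodLetter [false, true] k = true ↔ x ≤ X k) := fun k hk =>
    hX.letter_iff hw hk (S.apply_lt_apply (hJ k hk).1 (hJ k hk).2)
  have hstep0 : ∀ m, X (2 * m + 2) = φ0 (X (2 * m + 1)) := fun m => by
    simpa using hw (2 * m + 1) (by omega)
  have hstep1 : ∀ m, X (2 * (m + 1) + 1) = φ1 (X (2 * m + 2)) := fun m => by
    rw [show 2 * (m + 1) + 1 = 2 * m + 2 + 1 by ring]
    simpa using hw (2 * m + 2) (by omega)
  constructor
  · by_contra! h
    have hlim := (S.contr1.comp S.contr0).tendsto_of_step (u := fun m => X (2 * m + 1)) hI hy01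
      hfix01 (fun m => by rw [hstep1, hstep0]; rfl) (hJ 1 le_rfl).1
    obtain ⟨m, hm⟩ := (hlim.eventually_const_lt h).exists
    exact hm.not_gt (by simpa using hletter (2 * m + 1) (by omega))
  · by_contra! h
    have hlim := (S.contr0.comp S.contr1).tendsto_of_step (u := fun m => X (2 * m + 2)) hI hy10
      hfix10 (fun m => by rw [hstep0, hstep1]; rfl) (hJ 2 (by omega)).1
    obtain ⟨m, hm⟩ := (hlim.eventually_lt_const h).exists
    exact hm.not_ge (by simpa using hletter (2 * m + 2) (by omega))

end IsContractivePair

theorem stmt_12_general (I : Set ℝ) (hI : I.OrdConnected) (φ0 φ1 : ℝ → ℝ)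
    (h0maps : Set.MapsTo φ0 I I) (h1maps : Set.MapsTo φ1 I I)
    (h0inc : ∀ x ∈ I, ∀ y ∈ I, x < y → φ0 x < φ0 y)
    (h1inc : ∀ x ∈ I, ∀ y ∈ I, x < y → φ1 x < φ1 y)
    (h0contr : ∀ x ∈ I, ∀ y ∈ I, x < y → φ0 y - φ0 x < y - x)
    (h1contr : ∀ x ∈ I, ∀ y ∈ I, x < y → φ1 y - φ1 x < y - x)
    (y0 y1 : ℝ) (hy0I : y0 ∈ I) (hy1I : y1 ∈ I)
    (hfix0 : φ0 y0 = y0)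
    (hfix1 : φ1 y1 = y1)
    (hlt : y1 < y0)
    (y01 y10 : ℝ) (hy01I : y01 ∈ I) (hy10I : y10 ∈ I)
    (hfix01 : φ1 (φ0 y01) = y01)
    (hfix10 : φ0 (φ1 y10) = y10)
    (x : ℝ) (hx : x ∈ I)
    (X : ℕ → ℝ) (hX1 : X 1 = φ1 x)
    (hXs : ∀ k, 1 ≤ k → X (k + 1) = if x ≤ X k then φ1 (X k) else φ0 (X k)) :
    (IsThresholdWord φ0 φ1 X [true] ↔ x ≤ y1) ∧
    (IsThresholdWord φ0 φ1 X [false, true] ↔ x ∈ Set.Icc y01 y10) ∧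
    (IsThresholdWord φ0 φ1 X [false] ↔ y0 ≤ x) := by
  have S : IsContractivePair I φ0 φ1 y0 y1 :=
    ⟨⟨h0maps, fun a ha b hb => h0inc a ha b hb, h0contr⟩,
      ⟨h1maps, fun a ha b hb => h1inc a ha b hb, h1contr⟩, hy0I, hy1I, hfix0, hfix1, hlt⟩
  have hX : IsThresholdOrbit φ0 φ1 x X := ⟨hX1, hXs⟩
  have hone : FollowsWord φ0 φ1 X [true] ↔ x ≤ y1 :=
    ⟨S.le_of_followsWord_true hI hX hx, hX.followsWord_true_of_le S.contr1 hy1I hfix1 hx⟩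
  have hzero : FollowsWord φ0 φ1 X [false] ↔ y0 ≤ x :=
    ⟨S.le_of_followsWord_false hI hX hx, S.followsWord_false_of_le hX hx⟩
  refine ⟨(isThresholdWord_singleton_iff _).trans hone, ?_,
    (isThresholdWord_singleton_iff _).trans hzero⟩
  rw [isThresholdWord_pair_iff, hone, hzero, not_le, not_le]
  refine ⟨fun ⟨hw, hxy0, hy1x⟩ => S.mem_Icc_of_followsWord_pair hI hX hx hy01I hfix01 hy10I hfix10
    hw hy1x hxy0, fun hxI => ⟨S.followsWord_pair_of_mem_Icc hX hx hy01I hfix01 hy10I hfix10 hxI,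
      hxI.2.trans_lt (S.lt_fixed0_of_comp_fixed hy10I hfix10),
      (S.fixed1_lt_of_comp_fixed hy01I hfix01).trans_le hxI.1⟩⟩

/-- Under Assumption A1, with `y₀₁, y₁₀` the unique fixed points of
`φ₁∘φ₀` and `φ₀∘φ₁` respectively, and `X` the `x`-threshold orbit:
`π(x) = 1` iff `x ≤ y₁`; `π(x) = 01` iff `x ∈ [y₀₁, y₁₀]`; `π(x) = 0` iff `x ≥ y₀`. -/
theorem stmt_12 (I : Set ℝ) (hI : I.OrdConnected) (φ0 φ1 : ℝ → ℝ)
    (h0maps : Set.MapsTo φ0 I I) (h1maps : Set.MapsTo φ1 I I)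
    (h0inc : ∀ x ∈ I, ∀ y ∈ I, x < y → φ0 x < φ0 y)
    (h1inc : ∀ x ∈ I, ∀ y ∈ I, x < y → φ1 x < φ1 y)
    (h0contr : ∀ x ∈ I, ∀ y ∈ I, x < y → φ0 y - φ0 x < y - x)
    (h1contr : ∀ x ∈ I, ∀ y ∈ I, x < y → φ1 y - φ1 x < y - x)
    (y0 y1 : ℝ) (hy0I : y0 ∈ I) (hy1I : y1 ∈ I)
    (hfix0 : φ0 y0 = y0) (huniq0 : ∀ z ∈ I, φ0 z = z → z = y0)
    (hfix1 : φ1 y1 = y1) (huniq1 : ∀ z ∈ I, φ1 z = z → z = y1)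
    (hlt : y1 < y0)
    (y01 y10 : ℝ) (hy01I : y01 ∈ I) (hy10I : y10 ∈ I)
    (hfix01 : φ1 (φ0 y01) = y01) (huniq01 : ∀ z ∈ I, φ1 (φ0 z) = z → z = y01)
    (hfix10 : φ0 (φ1 y10) = y10) (huniq10 : ∀ z ∈ I, φ0 (φ1 z) = z → z = y10)
    (x : ℝ) (hx : x ∈ I)
    (X : ℕ → ℝ) (hX1 : X 1 = φ1 x)
    (hXs : ∀ k, 1 ≤ k → X (k + 1) = if x ≤ X k then φ1 (X k) else φ0 (X k)) :
    (IsThresholdWord φ0 φ1 X [true] ↔ x ≤ y1) ∧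
    (IsThresholdWord φ0 φ1 X [false, true] ↔ x ∈ Set.Icc y01 y10) ∧
    (IsThresholdWord φ0 φ1 X [false] ↔ y0 ≤ x) :=
  stmt_12_general I hI φ0 φ1 h0maps h1maps h0inc h1inc h0contr h1contr y0 y1 hy0I hy1I hfix0 hfix1
    hlt y01 y10 hy01I hy10I hfix01 hfix10 x hx X hX1 hXs
end

section
/- Let I be an interval of ℝ, φ₀, φ₁ : I → I strictly increasing maps, and z ∈ [−∞,∞]. For x ∈ I, define the itinerary σ(x|z) as the infinite binary word with σ(x|z)_t = 1 if x_t ≥ z, 0 otherwise, where x_1 = x and x_{t+1} = φ₁(x_t) if x_t ≥ z, else φ₀(x_t). If σ(x|z) ≺ σ(y|z) lexicographically, then x < y. -/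
open scoped Classical

/-- The orbit of the map-with-a-gap with threshold `z ∈ [-∞,∞]` started at `x`:
`itinOrbit φ0 φ1 z x t` is the paper's `x_{t+1}` (so index `0` is the start `x₁ = x`),
with `x_{t+1} = φ₁ x_t` if `x_t ≥ z` and `x_{t+1} = φ₀ x_t` otherwise. -/
noncomputable def itinOrbit (φ0 φ1 : ℝ → ℝ) (z : EReal) (x : ℝ) : ℕ → ℝ
  | 0 => x
  | n + 1 =>
      if z ≤ ((itinOrbit φ0 φ1 z x n : ℝ) : EReal) then φ1 (itinOrbit φ0 φ1 z x n)
      else φ0 (itinOrbit φ0 φ1 z x n)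

/-- The itinerary `σ(x|z)`: its `t`-th letter (0-indexed) is `1` iff `x_{t+1} ≥ z`. -/
noncomputable def itin (φ0 φ1 : ℝ → ℝ) (z : EReal) (x : ℝ) (t : ℕ) : Bool :=
  if z ≤ ((itinOrbit φ0 φ1 z x t : ℝ) : EReal) then true else false

/-- Strict lexicographic order on infinite binary words (`false` = 0 ≺ `true` = 1). -/
def LexLt (u v : ℕ → Bool) : Prop :=
  ∃ k, (∀ j < k, u j = v j) ∧ u k = false ∧ v k = true

section

variable {φ0 φ1 : ℝ → ℝ} {z : EReal}

lemma itin_eq_true_iff {x : ℝ} {t : ℕ} :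
    itin φ0 φ1 z x t = true ↔ z ≤ ((itinOrbit φ0 φ1 z x t : ℝ) : EReal) := by
  simp [itin]

lemma itinOrbit_succ (x : ℝ) (n : ℕ) :
    itinOrbit φ0 φ1 z x (n + 1) =
      cond (itin φ0 φ1 z x n) (φ1 (itinOrbit φ0 φ1 z x n)) (φ0 (itinOrbit φ0 φ1 z x n)) := by
  rw [itinOrbit, itin]
  split_ifs <;> rfl

lemma itinOrbit_lt_itinOrbit_of_itin {x y : ℝ} {t : ℕ} (hx : itin φ0 φ1 z x t = false)
    (hy : itin φ0 φ1 z y t = true) : itinOrbit φ0 φ1 z x t < itinOrbit φ0 φ1 z y t := by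
  rw [← Bool.not_eq_true, itin_eq_true_iff, not_le] at hx
  rw [itin_eq_true_iff] at hy
  exact_mod_cast hx.trans_le hy

lemma mapsTo_itinOrbit {I : Set ℝ} (h0 : Set.MapsTo φ0 I I) (h1 : Set.MapsTo φ1 I I)
    {x : ℝ} (hx : x ∈ I) (n : ℕ) : itinOrbit φ0 φ1 z x n ∈ I := by
  induction n with
  | zero => exact hx
  | succ n ih =>
    rw [itinOrbit_succ]
    cases itin φ0 φ1 z x n
    · exact h0 ih
    · exact h1 ih

/-- At each step before `n` both points are moved by the same monotone branch. -/
lemma itinOrbit_le_itinOrbit {I : Set ℝ} (h0 : Set.MapsTo φ0 I I) (h1 : Set.MapsTo φ1 I I)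
    (hφ0 : MonotoneOn φ0 I) (hφ1 : MonotoneOn φ1 I) {x y : ℝ} (hx : x ∈ I) (hy : y ∈ I)
    (hxy : x ≤ y) {n : ℕ} (hagree : ∀ j < n, itin φ0 φ1 z x j = itin φ0 φ1 z y j) :
    itinOrbit φ0 φ1 z x n ≤ itinOrbit φ0 φ1 z y n := by
  induction n with
  | zero => exact hxy
  | succ n ih =>
    have hle := ih fun j hj => hagree j (Nat.lt_succ_of_lt hj)
    have hxn := mapsTo_itinOrbit (z := z) h0 h1 hx n
    have hyn := mapsTo_itinOrbit (z := z) h0 h1 hy n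
    rw [itinOrbit_succ, itinOrbit_succ, hagree n n.lt_succ_self]
    cases itin φ0 φ1 z y n
    · exact hφ0 hxn hyn hle
    · exact hφ1 hxn hyn hle

end

theorem stmt_13_general (I : Set ℝ) (φ0 φ1 : ℝ → ℝ)
    (h0maps : Set.MapsTo φ0 I I) (h1maps : Set.MapsTo φ1 I I)
    (h0inc : ∀ x ∈ I, ∀ y ∈ I, x < y → φ0 x < φ0 y)
    (h1inc : ∀ x ∈ I, ∀ y ∈ I, x < y → φ1 x < φ1 y)
    (z : EReal) (x y : ℝ) (hx : x ∈ I) (hy : y ∈ I)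
    (h : LexLt (itin φ0 φ1 z x) (itin φ0 φ1 z y)) :
    x < y := by
  obtain ⟨k, hagree, hxk, hyk⟩ := h
  have hmono0 : MonotoneOn φ0 I := StrictMonoOn.monotoneOn fun a ha b hb => h0inc a ha b hb
  have hmono1 : MonotoneOn φ1 I := StrictMonoOn.monotoneOn fun a ha b hb => h1inc a ha b hb
  by_contra! hyx
  have hle := itinOrbit_le_itinOrbit h0maps h1maps hmono0 hmono1 hy hx hyx
    fun j hj => (hagree j hj).symm
  exact (itinOrbit_lt_itinOrbit_of_itin hxk hyk).not_ge hle

/-- For strictly increasing maps `φ₀, φ₁ : I → I` and a threshold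
`z ∈ [-∞,∞]`, if `σ(x|z) ≺ σ(y|z)` lexicographically then `x < y`. -/
theorem stmt_13 (I : Set ℝ) (hI : I.OrdConnected) (φ0 φ1 : ℝ → ℝ)
    (h0maps : Set.MapsTo φ0 I I) (h1maps : Set.MapsTo φ1 I I)
    (h0inc : ∀ x ∈ I, ∀ y ∈ I, x < y → φ0 x < φ0 y)
    (h1inc : ∀ x ∈ I, ∀ y ∈ I, x < y → φ1 x < φ1 y)
    (z : EReal) (x y : ℝ) (hx : x ∈ I) (hy : y ∈ I)
    (h : LexLt (itin φ0 φ1 z x) (itin φ0 φ1 z y)) :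
    x < y :=
  stmt_13_general I φ0 φ1 h0maps h1maps h0inc h1inc z x y hx hy h
end

section
/- Suppose (0a1, 0b1) is a Christoffel pair (i.e., a node of the Christoffel tree). Then a10b = b01a as words. -/
/-!
Writing `u = 0s` and `v = t1`, every Christoffel pair satisfies `uv = t01s`, so that `uv = t01s`
and `vu = t10s` differ only by swapping two adjacent letters. This invariant passes to both
children for free: the left child `(u, uv)` has `t' = ut`, the right child `(uv, v)` has
`s' = sv`. For `u = 0a1` and `v = 0b1` it reads `0a10b1 = 0b01a1`.
-/

/-- The nodes of the Christoffel tree: the root is the pair `(0, 1)` and the node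
`(u, v)` has children `(u, uv)` and `(uv, v)` (`false` = letter 0, `true` = letter 1). -/
inductive ChristoffelPair : List Bool → List Bool → Prop
  | root : ChristoffelPair [false] [true]
  | left {u v : List Bool} : ChristoffelPair u v → ChristoffelPair u (u ++ v)
  | right {u v : List Bool} : ChristoffelPair u v → ChristoffelPair (u ++ v) v

theorem ChristoffelPair.exists_append_eq {u v : List Bool} (h : ChristoffelPair u v) :
    ∃ s t, u = false :: s ∧ v = t ++ [true] ∧ u ++ v = t ++ [false, true] ++ s := by
  induction h with
  | root => exact ⟨[], [], rfl, rfl, rfl⟩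
  | left _ ih =>
    obtain ⟨s, t, rfl, rfl, huv⟩ := ih
    refine ⟨s, false :: s ++ t, rfl, by simp, ?_⟩
    simp only [List.append_assoc, List.cons_append] at huv ⊢
    rw [huv]
  | right _ ih =>
    obtain ⟨s, t, rfl, rfl, huv⟩ := ih
    refine ⟨s ++ t ++ [true], t, by simp, rfl, ?_⟩
    rw [huv]
    simp

/-- If `(0a1, 0b1)` is a Christoffel pair, then `a10b = b01a`. -/
theorem stmt_15 (a b : List Bool)
    (h : ChristoffelPair ([false] ++ a ++ [true]) ([false] ++ b ++ [true])) :
    a ++ [true, false] ++ b = b ++ [false, true] ++ a := by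
  obtain ⟨s, t, hu, hv, huv⟩ := h.exists_append_eq
  have hs : s = a ++ [true] := by simpa using hu.symm
  have ht : t = false :: b := List.append_cancel_right (hv.symm.trans (by simp))
  subst hs ht
  exact List.append_cancel_right (by simpa using huv)
end

section
/- Suppose the word 0c1 lies in the subtree of the Christoffel tree rooted at 0p1. Then p is both a prefix and a suffix of c. -/
/-- One parent-to-child step in the Christoffel tree. -/
inductive TreeStep : List Bool × List Bool → List Bool × List Bool → Prop
  | left (u v : List Bool) : TreeStep (u, v) (u, u ++ v)
  | right (u v : List Bool) : TreeStep (u, v) (u ++ v, v)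

/-!
Write a Christoffel pair as `u = 0u₀`, `v = v₀1`, so that its word is `0(u₀v₀)1`. Every pair
satisfies `v₀ <+: u v₀` and `u₀ <:+ u₀ v`, and both facts pass from a pair to its two children.
They are exactly what makes the central word `u₀v₀` a prefix of the left child's central word
`u₀0u₀v₀` and a suffix of the right child's `u₀v₀1v₀`; the other inclusion is trivial in each
case, and the claim follows by transitivity along the path from `(u, v)` down to `(u', v')`.
-/

namespace ChristoffelPair

theorem exists_eq_cons_eq_append_isPrefix_isSuffix {u v : List Bool} (h : ChristoffelPair u v) :
    ∃ u₀ v₀, u = false :: u₀ ∧ v = v₀ ++ [true] ∧ v₀ <+: u ++ v₀ ∧ u₀ <:+ u₀ ++ v := by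
  induction h with
  | root => exact ⟨[], [], rfl, rfl, List.nil_prefix, List.nil_suffix⟩
  | @left u v _ ih =>
    obtain ⟨u₀, v₀, rfl, rfl, hpre, hsuf⟩ := ih
    refine ⟨u₀, false :: u₀ ++ v₀, rfl, by simp, (List.prefix_append_right_inj _).mpr hpre, ?_⟩
    exact hsuf.trans ((List.suffix_cons _ _).trans (List.suffix_append _ _))
  | @right u v _ ih =>
    obtain ⟨u₀, v₀, rfl, rfl, hpre, hsuf⟩ := ih
    refine ⟨u₀ ++ v₀ ++ [true], v₀, by simp, rfl, ?_, ?_⟩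
    · exact hpre.trans ⟨[true] ++ v₀, by simp⟩
    · simpa only [List.append_assoc] using List.suffix_append_self_iff.mpr hsuf

theorem of_treeStep {a b : List Bool × List Bool} (h : ChristoffelPair a.1 a.2)
    (hab : TreeStep a b) : ChristoffelPair b.1 b.2 := by
  cases hab with
  | left => exact h.left
  | right => exact h.right

theorem of_reflTransGen {a b : List Bool × List Bool} (h : ChristoffelPair a.1 a.2)
    (hab : Relation.ReflTransGen TreeStep a b) : ChristoffelPair b.1 b.2 := by
  induction hab with
  | refl => exact h
  | tail _ hstep ih => exact ih.of_treeStep hstep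

def centralWord (x : List Bool × List Bool) : List Bool :=
  (x.1 ++ x.2).tail.dropLast

theorem centralWord_eq {x : List Bool × List Bool} {w : List Bool}
    (h : x.1 ++ x.2 = [false] ++ w ++ [true]) : centralWord x = w := by
  simp [centralWord, h]

theorem centralWord_isPrefix_isSuffix_of_treeStep {a b : List Bool × List Bool}
    (h : ChristoffelPair a.1 a.2) (hab : TreeStep a b) :
    centralWord a <+: centralWord b ∧ centralWord a <:+ centralWord b := by
  obtain ⟨u₀, v₀, hu, hv, hpre, hsuf⟩ := h.exists_eq_cons_eq_append_isPrefix_isSuffix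
  cases hab with
  | left =>
    subst hu hv
    rw [centralWord_eq (w := u₀ ++ v₀) (by simp),
      centralWord_eq (w := u₀ ++ false :: u₀ ++ v₀) (by simp)]
    exact ⟨by simpa using hpre, ⟨u₀ ++ [false], by simp⟩⟩
  | right =>
    subst hu hv
    rw [centralWord_eq (w := u₀ ++ v₀) (by simp),
      centralWord_eq (w := u₀ ++ v₀ ++ true :: v₀) (by simp)]
    refine ⟨List.prefix_append _ _, ?_⟩
    obtain ⟨t, ht⟩ := hsuf
    exact ⟨t, by simpa using congrArg (· ++ v₀) ht⟩

theorem centralWord_isPrefix_isSuffix_of_reflTransGen {a b : List Bool × List Bool}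
    (h : ChristoffelPair a.1 a.2) (hab : Relation.ReflTransGen TreeStep a b) :
    centralWord a <+: centralWord b ∧ centralWord a <:+ centralWord b := by
  induction hab with
  | refl => exact ⟨List.prefix_refl _, List.suffix_refl _⟩
  | tail ham hstep ih =>
    have hstep' := centralWord_isPrefix_isSuffix_of_treeStep (h.of_reflTransGen ham) hstep
    exact ⟨ih.1.trans hstep'.1, ih.2.trans hstep'.2⟩

end ChristoffelPair

/-- If the Christoffel word `0c1` (the concatenation of the node
`(u', v')`) lies in the subtree of the Christoffel tree rooted at the node `(u, v)`
whose concatenation is `0p1`, then `p` is both a prefix and a suffix of `c`. -/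
theorem stmt_16 (u v u' v' p c : List Bool)
    (hnode : ChristoffelPair u v)
    (hdesc : Relation.ReflTransGen TreeStep (u, v) (u', v'))
    (hp : u ++ v = [false] ++ p ++ [true])
    (hc : u' ++ v' = [false] ++ c ++ [true]) :
    p <+: c ∧ p <:+ c := by
  have h := hnode.centralWord_isPrefix_isSuffix_of_reflTransGen hdesc
  rwa [ChristoffelPair.centralWord_eq hp, ChristoffelPair.centralWord_eq hc] at h
end

section
/- Let 0 ≤ α < β ≤ 1 and let a, b be the mechanical words of rates α and β respectively (a = the shortest word with (a^ω)_n = ⌊αn⌋ − ⌊α(n−1)⌋ for all n, similarly b). Then a^ω ≺ b^ω in lexicographic order. -/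
/-!
Since `α ≤ β`, we have `⌊α k⌋ ≤ ⌊β k⌋` for every `k`, with equality at `k = 0`, and strict
inequality once `(β - α) k ≥ 1`. At the first `n` where the floors differ, the increments of the
two sequences agree before `n` and the increment of the `β`-sequence is larger at `n`.
-/

theorem exists_first_sub_pred_lt_of_le {f g : ℕ → ℤ} (hfg : f ≤ g) (h0 : f 0 = g 0)
    (hlt : ∃ n, f n < g n) :
    ∃ n, 1 ≤ n ∧ (∀ k, 1 ≤ k → k < n → f k - f (k - 1) = g k - g (k - 1)) ∧
      f n - f (n - 1) < g n - g (n - 1) := by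
  classical
  set n := Nat.find hlt
  have hn : f n < g n := Nat.find_spec hlt
  have heq : ∀ m < n, f m = g m := fun m hm =>
    le_antisymm (hfg m) (not_lt.mp (Nat.find_min hlt hm))
  have hn1 : 1 ≤ n := Nat.one_le_iff_ne_zero.mpr fun h => by rw [h, h0] at hn; exact hn.false
  refine ⟨n, hn1, fun k hk hkn => ?_, ?_⟩
  · rw [heq k hkn, heq (k - 1) (by omega)]
  · have := heq (n - 1) (by omega)
    omega

theorem exists_floor_mul_lt_floor_mul {α β : ℝ} (hab : α < β) :
    ∃ n : ℕ, ⌊α * n⌋ < ⌊β * n⌋ := by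
  obtain ⟨n, hn⟩ := exists_nat_gt (1 / (β - α))
  have hgap : α * n + 1 ≤ β * n := by
    rw [div_lt_iff₀ (sub_pos.mpr hab)] at hn
    linarith
  refine ⟨n, ?_⟩
  calc ⌊α * n⌋ < ⌊α * n⌋ + 1 := lt_add_one _
    _ = ⌊α * n + 1⌋ := (Int.floor_add_one _).symm
    _ ≤ ⌊β * n⌋ := Int.floor_le_floor hgap

theorem stmt_17_general (α β : ℝ) (hab : α < β) :
    ∃ n : ℕ, 1 ≤ n ∧
      (∀ k, 1 ≤ k → k < n →
        ⌊α * (k : ℝ)⌋ - ⌊α * ((k : ℝ) - 1)⌋ = ⌊β * (k : ℝ)⌋ - ⌊β * ((k : ℝ) - 1)⌋) ∧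
      ⌊α * (n : ℝ)⌋ - ⌊α * ((n : ℝ) - 1)⌋ < ⌊β * (n : ℝ)⌋ - ⌊β * ((n : ℝ) - 1)⌋ := by
  have hmono : (fun k : ℕ => ⌊α * k⌋) ≤ fun k : ℕ => ⌊β * k⌋ := fun k =>
    Int.floor_le_floor (mul_le_mul_of_nonneg_right hab.le k.cast_nonneg)
  obtain ⟨n, hn, heq, hlt⟩ :=
    exists_first_sub_pred_lt_of_le hmono (by simp) (exists_floor_mul_lt_floor_mul hab)
  refine ⟨n, hn, fun k hk hkn => ?_, ?_⟩
  · simpa only [← Nat.cast_pred hk] using heq k hk hkn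
  · simpa only [← Nat.cast_pred hn] using hlt

/-- Let `0 ≤ α < β ≤ 1` and consider the infinite mechanical
sequences with `n`-th term `⌊αn⌋ - ⌊α(n-1)⌋` and `⌊βn⌋ - ⌊β(n-1)⌋` respectively
(these are `a^ω` and `b^ω` for the mechanical words `a, b` of rates `α, β`).
Then the first sequence is strictly lexicographically smaller than the second:
at the first index where they differ the first has a `0` and the second a `1`. -/
theorem stmt_17 (α β : ℝ) (h0 : 0 ≤ α) (hab : α < β) (h1 : β ≤ 1) :
    ∃ n : ℕ, 1 ≤ n ∧
      (∀ k, 1 ≤ k → k < n →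
        ⌊α * (k : ℝ)⌋ - ⌊α * ((k : ℝ) - 1)⌋ = ⌊β * (k : ℝ)⌋ - ⌊β * ((k : ℝ) - 1)⌋) ∧
      ⌊α * (n : ℝ)⌋ - ⌊α * ((n : ℝ) - 1)⌋ < ⌊β * (n : ℝ)⌋ - ⌊β * ((n : ℝ) - 1)⌋ :=
  stmt_17_general α β hab
end

section
/- For r ∈ (0,1] and a, b ∈ ℝ with 0 ≤ a ≤ b, let F = [[r, 1/r],[ar, (a+1)/r]], G = [[r, 1/r],[br, (b+1)/r]], and K = [[r, 1/r],[r−r³, −r]]. Then det F = det G = 1, K² = I, (KF)² = I, (KG)² = I, and consequently for any finite binary word w (with M(0)=F, M(1)=G, M(w) the product M(w_{|w|})⋯M(w_1)), one has K·M(w)^{−1}·K = M(w^R), where w^R is the reverse word. Moreover, for any word w, M(w) − M(w^R) = tr(K·M(w))·K. -/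
/-!
`K` is an involution and `K F`, `K G` are involutions too, so conjugation by `K` inverts each
letter matrix; since it is multiplicative and inversion reverses products, it sends `M(w)⁻¹`
to `M(w^R)`. For the trace identity put `B = K M(w)`: as `det B = -1`, the 2×2 Cayley–Hamilton
theorem gives `B - B⁻¹ = tr(B) I`, and multiplying on the left by `K` yields
`M(w) - K M(w)⁻¹ K = tr(K M(w)) K`.
-/

open Matrix

theorem List.foldl_mul_left_eq_prod_reverse_map {ι M : Type*} [Monoid M] (m : ι → M)
    (w : List ι) (x : M) :
    w.foldl (fun A i => m i * A) x = (w.reverse.map m).prod * x := by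
  induction w generalizing x with
  | nil => simp
  | cons i w ih => simp [ih, mul_assoc]

theorem conj_prod_mul_prod_reverse_eq_one {ι M : Type*} [Monoid M] {K : M} (hK : K * K = 1)
    {m : ι → M} (hm : ∀ i, K * m i * (K * m i) = 1) (w : List ι) :
    K * (w.map m).prod * K * (w.reverse.map m).prod = 1 := by
  induction w with
  | nil => simpa using hK
  | cons i w ih =>
    simp only [List.map_cons, List.map_nil, List.prod_cons, List.prod_nil, mul_one,
      List.reverse_cons, List.map_append, List.prod_append]
    calc K * (m i * (w.map m).prod) * K * ((w.reverse.map m).prod * m i)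
        = K * m i * (K * K) * (w.map m).prod * K * (w.reverse.map m).prod * m i := by
          rw [hK, mul_one]; simp only [mul_assoc]
      _ = K * m i * K * (K * (w.map m).prod * K * (w.reverse.map m).prod) * m i := by
          simp only [mul_assoc]
      _ = 1 := by rw [ih, mul_one, mul_assoc (K * m i), hm]

namespace Matrix

variable {n R : Type*} [Fintype n] [DecidableEq n] [CommRing R]

theorem conj_inv_prod_reverse_map {ι : Type*} {K : Matrix n n R} (hK : K * K = 1)
    {m : ι → Matrix n n R} (hm : ∀ i, K * m i * (K * m i) = 1) (w : List ι) :
    K * (w.reverse.map m).prod⁻¹ * K = (w.map m).prod := by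
  rw [inv_eq_left_inv (conj_prod_mul_prod_reverse_eq_one hK hm w)]
  simp only [← mul_assoc, hK, one_mul]
  rw [mul_assoc, hK, mul_one]

theorem sub_conj_inv_eq_trace_smul {K A : Matrix (Fin 2) (Fin 2) R} (hK : K * K = 1)
    (hKdet : K.det = -1) (hA : A.det = 1) : A - K * A⁻¹ * K = trace (K * A) • K := by
  have hinv : A⁻¹ = adjugate A := by simp [inv_def, hA]
  have hadjK : adjugate K = -K := by
    calc adjugate K = K * (K * adjugate K) := by rw [← mul_assoc, hK, one_mul]
      _ = -K := by simp [mul_adjugate, hKdet]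
  have hCH : adjugate (K * A) = trace (K * A) • 1 - K * A := by
    ext i j; fin_cases i <;> fin_cases j <;> simp [adjugate_fin_two, trace_fin_two]
  rw [adjugate_mul_distrib, ← hinv, hadjK] at hCH
  calc A - K * A⁻¹ * K = A + K * (A⁻¹ * -K) := by noncomm_ring
    _ = trace (K * A) • K := by
      rw [hCH, mul_sub, ← mul_assoc, hK, one_mul, mul_smul_comm, mul_one]; abel

end Matrix

noncomputable def letterMatrix (r c : ℝ) : Matrix (Fin 2) (Fin 2) ℝ :=
  !![r, 1 / r; c * r, (c + 1) / r]

noncomputable def reflectionMatrix (r : ℝ) : Matrix (Fin 2) (Fin 2) ℝ :=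
  !![r, 1 / r; r - r ^ 3, -r]

section

variable {r : ℝ}

theorem det_letterMatrix (hr : r ≠ 0) (c : ℝ) : (letterMatrix r c).det = 1 := by
  rw [letterMatrix, det_fin_two_of]; field_simp; ring

theorem det_reflectionMatrix (hr : r ≠ 0) : (reflectionMatrix r).det = -1 := by
  rw [reflectionMatrix, det_fin_two_of]; field_simp; ring

theorem reflectionMatrix_mul_self (hr : r ≠ 0) : reflectionMatrix r * reflectionMatrix r = 1 := by
  simp only [reflectionMatrix, mul_fin_two, one_fin_two]
  ext i j; fin_cases i <;> fin_cases j <;>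
    (simp only [Fin.zero_eta, Fin.mk_one, of_apply, cons_val', cons_val_zero, cons_val_one,
      cons_val_fin_one]; field_simp; ring)

theorem reflectionMatrix_mul_letterMatrix_mul_self (hr : r ≠ 0) (c : ℝ) :
    reflectionMatrix r * letterMatrix r c * (reflectionMatrix r * letterMatrix r c) = 1 := by
  simp only [reflectionMatrix, letterMatrix, mul_fin_two, one_fin_two]
  ext i j; fin_cases i <;> fin_cases j <;>
    (simp only [Fin.zero_eta, Fin.mk_one, of_apply, cons_val', cons_val_zero, cons_val_one,
      cons_val_fin_one]; field_simp; ring)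

end

theorem stmt_19_general (r a b : ℝ) (hr0 : 0 < r)
    (F G K : Matrix (Fin 2) (Fin 2) ℝ)
    (hF : F = !![r, 1 / r; a * r, (a + 1) / r])
    (hG : G = !![r, 1 / r; b * r, (b + 1) / r])
    (hK : K = !![r, 1 / r; r - r ^ 3, -r])
    (M : List Bool → Matrix (Fin 2) (Fin 2) ℝ)
    (hM : ∀ w, M w = w.foldl (fun A l => (if l then G else F) * A) 1) :
    F.det = 1 ∧ G.det = 1 ∧ K * K = 1 ∧ (K * F) * (K * F) = 1 ∧ (K * G) * (K * G) = 1 ∧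
    (∀ w : List Bool, K * (M w)⁻¹ * K = M w.reverse) ∧
    (∀ w : List Bool, M w - M w.reverse = Matrix.trace (K * M w) • K) := by
  have hr := hr0.ne'
  have hdetF : F.det = 1 := hF ▸ det_letterMatrix hr a
  have hdetG : G.det = 1 := hG ▸ det_letterMatrix hr b
  have hdetK : K.det = -1 := hK ▸ det_reflectionMatrix hr
  have hKK : K * K = 1 := hK ▸ reflectionMatrix_mul_self hr
  have hKF : K * F * (K * F) = 1 := hK ▸ hF ▸ reflectionMatrix_mul_letterMatrix_mul_self hr a
  have hKG : K * G * (K * G) = 1 := hK ▸ hG ▸ reflectionMatrix_mul_letterMatrix_mul_self hr b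
  set m : Bool → Matrix (Fin 2) (Fin 2) ℝ := fun l => if l then G else F
  have hMprod : ∀ w, M w = (w.reverse.map m).prod := fun w => by
    rw [hM, List.foldl_mul_left_eq_prod_reverse_map, mul_one]
  have hrev : ∀ w, K * (M w)⁻¹ * K = M w.reverse := fun w => by
    rw [hMprod, hMprod, List.reverse_reverse]
    exact conj_inv_prod_reverse_map hKK (by rintro (_ | _) <;> assumption) w
  have hdetM : ∀ w, (M w).det = 1 := fun w => by
    rw [hMprod, ← coe_detMonoidHom, map_list_prod, List.map_map]
    refine List.prod_eq_one fun x hx => ?_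
    obtain ⟨(_ | _), -, rfl⟩ := List.mem_map.1 hx <;> assumption
  refine ⟨hdetF, hdetG, hKK, hKF, hKG, hrev, fun w => ?_⟩
  rw [← hrev w]
  exact sub_conj_inv_eq_trace_smul hKK hdetK (hdetM w)

/-- For `r ∈ (0,1]` and `0 ≤ a ≤ b`, with
`F = [[r, 1/r],[ar, (a+1)/r]]`, `G = [[r, 1/r],[br, (b+1)/r]]`,
`K = [[r, 1/r],[r-r³, -r]]`, and `M(w)` the product `M(w_{|w|})⋯M(w_1)` over a binary
word `w` (`M(0) = F`, `M(1) = G`, `M(ε) = I`):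
`det F = det G = 1`, `K² = I`, `(KF)² = I`, `(KG)² = I`,
`K·M(w)⁻¹·K = M(w^R)` and `M(w) - M(w^R) = tr(K·M(w))·K` for every word `w`. -/
theorem stmt_19 (r a b : ℝ) (hr0 : 0 < r) (hr1 : r ≤ 1) (ha : 0 ≤ a) (hab : a ≤ b)
    (F G K : Matrix (Fin 2) (Fin 2) ℝ)
    (hF : F = !![r, 1 / r; a * r, (a + 1) / r])
    (hG : G = !![r, 1 / r; b * r, (b + 1) / r])
    (hK : K = !![r, 1 / r; r - r ^ 3, -r])
    (M : List Bool → Matrix (Fin 2) (Fin 2) ℝ)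
    (hM : ∀ w, M w = w.foldl (fun A l => (if l then G else F) * A) 1) :
    F.det = 1 ∧ G.det = 1 ∧ K * K = 1 ∧ (K * F) * (K * F) = 1 ∧ (K * G) * (K * G) = 1 ∧
    (∀ w : List Bool, K * (M w)⁻¹ * K = M w.reverse) ∧
    (∀ w : List Bool, M w - M w.reverse = Matrix.trace (K * M w) • K) :=
  stmt_19_general r a b hr0 F G K hF hG hK M hM
end
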